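/- arXiv:2112.06123 — 8 statements merged into one kernel-verified Lean document; each statement's English description precedes it below -/
import Mathlib

section
/- Let d ≥ 1, let 𝓜 denote the Borel measures on ℝ^d, let S ⊆ ℝ^d be a Borel set, let Λ ≥ 0, and let f : 𝓜 → ℝ satisfy (i) |f(μ)| ≤ Λ for every μ ∈ 𝓜, and (ii) the locality property f(μ) = f(μ⌞S) for every μ ∈ 𝓜, where μ⌞S denotes the restriction of the measure μ to S. Then for every nonempty finite index set E, every family of points (x_i)_{i∈E} in ℝ^d and every μ ∈ 𝓜: |(D_E f)(μ)| ≤ 2^{|E|} Λ ∏_{i∈E} 1_{S}(x_i); in particular, if x_i ∉ S for some i ∈ E then D_E f vanishes identically. -/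
open MeasureTheory

/-- The iterated difference operator
`(D_F f)(μ) = ∑_{G ⊆ F} (−1)^{|F∖G|} f(μ + ∑_{i∈G} δ_{x_i})`. -/
noncomputable def iterDiff {d : ℕ} {ι : Type*} [DecidableEq ι]
    (x : ι → Fin d → ℝ) (F : Finset ι)
    (f : Measure (Fin d → ℝ) → ℝ) (μ : Measure (Fin d → ℝ)) : ℝ :=
  ∑ G ∈ F.powerset,
    (-1 : ℝ) ^ ((F \ G).card) * f (μ + ∑ i ∈ G, Measure.dirac (x i))

/-!
`D_E f` is the alternating sum of `2^|E|` values of `f`, which gives the bound `2^|E| Λ`.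
For the vanishing, `D_{E} f = D_{E∖{i}} (f^{i}) − D_{E∖{i}} f`; a local `f` does not see a
Dirac mass outside `S`, so `f^{i} = f` as soon as `x_i ∉ S`, and the difference is zero.
-/

theorem apply_add_dirac_of_notMem {α β : Type*} [MeasurableSpace α]
    [MeasurableSingletonClass α] {S : Set α} {f : Measure α → β}
    (hloc : ∀ μ, f μ = f (μ.restrict S)) {a : α} (ha : a ∉ S) (μ : Measure α) :
    f (μ + Measure.dirac a) = f μ := by
  classical
  rw [hloc, hloc μ, Measure.restrict_add, restrict_dirac, if_neg ha, add_zero]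

section iterDiff

variable {d : ℕ} {ι : Type*} [DecidableEq ι] (x : ι → Fin d → ℝ)

theorem iterDiff_insert (f : Measure (Fin d → ℝ) → ℝ) {i : ι} {s : Finset ι} (hi : i ∉ s)
    (μ : Measure (Fin d → ℝ)) :
    iterDiff x (insert i s) f μ =
      iterDiff x s (fun ν => f (ν + Measure.dirac (x i))) μ - iterDiff x s f μ := by
  unfold iterDiff
  rw [Finset.sum_powerset_insert hi, ← Finset.sum_sub_distrib, ← Finset.sum_add_distrib]
  refine Finset.sum_congr rfl fun t ht => ?_
  have hit : i ∉ t := fun h => hi (Finset.mem_powerset.mp ht h)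
  have hcard : (insert i s \ t).card = (s \ t).card + 1 := by
    rw [Finset.insert_sdiff_of_notMem _ hit, Finset.card_insert_of_notMem]
    exact fun h => hi (Finset.mem_sdiff.mp h).1
  have hdiff : insert i s \ insert i t = s \ t := by
    rw [Finset.insert_sdiff_insert, Finset.sdiff_insert_of_notMem hi]
  rw [hcard, hdiff, Finset.sum_insert hit, add_comm (Measure.dirac (x i)), ← add_assoc, pow_succ]
  ring

theorem iterDiff_eq_zero_of_local {S : Set (Fin d → ℝ)} {f : Measure (Fin d → ℝ) → ℝ}
    (hloc : ∀ μ, f μ = f (μ.restrict S)) {E : Finset ι} {i : ι} (hiE : i ∈ E) (hxi : x i ∉ S)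
    (μ : Measure (Fin d → ℝ)) :
    iterDiff x E f μ = 0 := by
  rw [← Finset.insert_erase hiE, iterDiff_insert x f (E.notMem_erase i)]
  simp only [apply_add_dirac_of_notMem hloc hxi, sub_self]

theorem abs_iterDiff_le {Λ : ℝ} {f : Measure (Fin d → ℝ) → ℝ} (hbd : ∀ μ, |f μ| ≤ Λ)
    (E : Finset ι) (μ : Measure (Fin d → ℝ)) :
    |iterDiff x E f μ| ≤ 2 ^ E.card * Λ :=
  calc |iterDiff x E f μ|
      ≤ ∑ G ∈ E.powerset, |(-1 : ℝ) ^ (E \ G).card * f (μ + ∑ i ∈ G, Measure.dirac (x i))| :=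
        Finset.abs_sum_le_sum_abs _ _
    _ ≤ ∑ _G ∈ E.powerset, Λ := Finset.sum_le_sum fun G _ => by simpa using hbd _
    _ = 2 ^ E.card * Λ := by simp [Finset.card_powerset]

end iterDiff

theorem iterated_difference_locality_bound_general
    {d : ℕ} {ι : Type*} [DecidableEq ι]
    (S : Set (Fin d → ℝ))
    (Λ : ℝ)
    (f : Measure (Fin d → ℝ) → ℝ)
    (hbd : ∀ μ, |f μ| ≤ Λ)
    (hloc : ∀ μ, f μ = f (μ.restrict S))
    (E : Finset ι) (x : ι → Fin d → ℝ) :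
    (∀ μ, |iterDiff x E f μ| ≤
        (2 : ℝ) ^ E.card * Λ * ∏ i ∈ E, S.indicator (fun _ => (1 : ℝ)) (x i)) ∧
    (∀ i ∈ E, x i ∉ S → ∀ μ, iterDiff x E f μ = 0) := by
  refine ⟨fun μ => ?_, fun i hiE hxi => iterDiff_eq_zero_of_local x hloc hiE hxi⟩
  by_cases hE : ∀ i ∈ E, x i ∈ S
  · rw [Finset.prod_eq_one fun i hi => Set.indicator_of_mem (hE i hi) _, mul_one]
    exact abs_iterDiff_le x hbd E μ
  · obtain ⟨i, hiE, hxi⟩ := not_forall₂.mp hE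
    rw [iterDiff_eq_zero_of_local x hloc hiE hxi μ,
      Finset.prod_eq_zero hiE (Set.indicator_of_notMem hxi _), mul_zero, abs_zero]

/-- if `f` is bounded by `Λ` and local (i.e. `f(μ) = f(μ⌞S)`), then for any
nonempty finite index set `E`, `|D_E f(μ)| ≤ 2^{|E|} Λ ∏_{i∈E} 1_S(x_i)`; in particular,
`D_E f` vanishes identically as soon as some `x_i` lies outside `S`. -/
theorem iterated_difference_locality_bound
    {d : ℕ} (hd : 1 ≤ d) {ι : Type*} [DecidableEq ι]
    (S : Set (Fin d → ℝ)) (hS : MeasurableSet S)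
    (Λ : ℝ) (hΛ : 0 ≤ Λ)
    (f : Measure (Fin d → ℝ) → ℝ)
    (hbd : ∀ μ, |f μ| ≤ Λ)
    (hloc : ∀ μ, f μ = f (μ.restrict S))
    (E : Finset ι) (hE : E.Nonempty) (x : ι → Fin d → ℝ) :
    (∀ μ, |iterDiff x E f μ| ≤
        (2 : ℝ) ^ E.card * Λ * ∏ i ∈ E, S.indicator (fun _ => (1 : ℝ)) (x i)) ∧
    (∀ i ∈ E, x i ∉ S → ∀ μ, iterDiff x E f μ = 0) :=
  iterated_difference_locality_bound_general S Λ f hbd hloc E x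
end

section
/- Let d ≥ 1, ρ > 0, let Q ⊆ ℝ^d be a bounded Borel set, let B ⊆ Q be a Borel subset, and let n ∈ ℕ. For every measurable function F : 𝓜 → [0,∞], one has E_ρ^Q[μ ↦ F(μ)·1{μ(B) ≥ n}] ≤ ρ^n ∫_{B^n} E_ρ^Q[μ ↦ F(μ + δ_{y₁} + ⋯ + δ_{y_n})] dy₁⋯dy_n, with both sides understood as values in [0,∞]. -/
open MeasureTheory
open scoped ENNReal

/-- The expectation of a `[0,∞]`-valued functional `F` of the configuration under the
Poisson point process of intensity `ρ` on the bounded Borel set `Q`. -/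
noncomputable def poissonExp (d : ℕ) (ρ : ℝ) (Q : Set (Fin d → ℝ))
    (F : Measure (Fin d → ℝ) → ℝ≥0∞) : ℝ≥0∞ :=
  ENNReal.ofReal (Real.exp (-(ρ * (volume Q).toReal))) *
    ∑' k : ℕ, ENNReal.ofReal (ρ ^ k / (Nat.factorial k : ℝ)) *
      ∫⁻ x in {y : Fin k → (Fin d → ℝ) | ∀ i, y i ∈ Q},
        F (∑ i, Measure.dirac (x i))

/-!
A configuration of `k` points has at least `n` of them in `B` exactly when some injection
`σ : Fin n ↪ Fin k` puts all the points `x (σ j)` in `B`, so the indicator is bounded by a sum over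
such `σ`. Since Lebesgue measure on `Q^k` is invariant under permuting the points, every `σ`
contributes the same integral, and Fubini splits it into `n` points in `B` and `m = k - n` points
in `Q`. The `(m + n)! / m!` injections cancel the Poisson weights:
`ρ^(m+n) / (m+n)! * (m+n)! / m! = ρ^n * ρ^m / m!`.
-/

open Measure Finset

lemma Function.Embedding.exists_sumEquiv_apply_inr {κ ι η : Type*} [Fintype κ] [Fintype ι]
    [Fintype η] (σ : ι ↪ η) (h : Fintype.card κ + Fintype.card ι = Fintype.card η) :
    ∃ e : κ ⊕ ι ≃ η, ∀ j, e (.inr j) = σ j := by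
  classical
  have hc : Fintype.card κ = Fintype.card ↥(Set.range σ)ᶜ := by
    rw [Fintype.card_compl_set, Set.card_range_of_injective σ.injective]
    omega
  refine ⟨(Equiv.sumComm κ ι).trans ((Equiv.sumCongr (Equiv.ofInjective σ σ.injective)
    (Fintype.equivOfCardEq hc)).trans (Equiv.Set.sumCompl _)), fun j => ?_⟩
  simp

section MeasurableSpace

variable {α ι : Type*} [MeasurableSpace α]

lemma measurable_sum_dirac [Fintype ι] : Measurable fun x : ι → α => ∑ i, dirac (x i) :=
  Finset.measurable_sum _ fun i _ => measurable_dirac.comp (measurable_pi_apply i)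

lemma measurableSet_setOf_forall_mem {κ : Type*} [Countable κ] (f : κ → ι) {s : Set α}
    (hs : MeasurableSet s) : MeasurableSet {x : ι → α | ∀ j, x (f j) ∈ s} := by
  rw [Set.ofPred_forall]
  exact .iInter fun j => measurable_pi_apply (f j) hs

lemma exists_embedding_of_le_sum_dirac [Fintype ι] {x : ι → α} {s : Set α}
    (hs : MeasurableSet s) {n : ℕ} (h : (n : ℝ≥0∞) ≤ (∑ i, dirac (x i)) s) :
    ∃ σ : Fin n ↪ ι, ∀ j, x (σ j) ∈ s := by
  classical
  have hcard : (∑ i, dirac (x i)) s = #{i | x i ∈ s} := by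
    simp [Measure.finsetSum_apply, dirac_apply' _ hs, Set.indicator_apply, Finset.sum_boole]
  rw [hcard, Nat.cast_le] at h
  obtain ⟨σ, hσ⟩ := Function.Embedding.exists_of_card_le_finset (α := Fin n)
    (s := {i | x i ∈ s}) (by simpa using h)
  exact ⟨σ, fun j => by simpa using hσ (Set.mem_range_self j)⟩

lemma indicator_le_sum_indicator_embedding [Fintype ι] [DecidableEq ι] {s : Set α}
    (hs : MeasurableSet s) (n : ℕ) (f : Measure α → ℝ≥0∞) (x : ι → α) :
    {ν : Measure α | (n : ℝ≥0∞) ≤ ν s}.indicator f (∑ i, dirac (x i)) ≤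
      ∑ σ : Fin n ↪ ι,
        {y : ι → α | ∀ j, y (σ j) ∈ s}.indicator (fun y => f (∑ i, dirac (y i))) x := by
  by_cases h : (n : ℝ≥0∞) ≤ (∑ i, dirac (x i)) s
  · obtain ⟨σ, hσ⟩ := exists_embedding_of_le_sum_dirac hs h
    rw [Set.indicator_of_mem (show _ ∈ {ν : Measure α | (n : ℝ≥0∞) ≤ ν s} from h)]
    calc f (∑ i, dirac (x i))
        = {y : ι → α | ∀ j, y (σ j) ∈ s}.indicator (fun y => f (∑ i, dirac (y i))) x :=
          (Set.indicator_of_mem (s := {y : ι → α | ∀ j, y (σ j) ∈ s}) hσ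
            (fun y => f (∑ i, dirac (y i)))).symm
      _ ≤ _ := Finset.single_le_sum (f := fun τ : Fin n ↪ ι =>
          {y : ι → α | ∀ j, y (τ j) ∈ s}.indicator (fun y => f (∑ i, dirac (y i))) x)
          (fun _ _ => zero_le) (Finset.mem_univ σ)
  · simp [Set.indicator_of_notMem (show _ ∉ {ν : Measure α | (n : ℝ≥0∞) ≤ ν s} from h)]

lemma setLIntegral_indicator_le_sum_embedding [Fintype ι] [DecidableEq ι] {μ : Measure (ι → α)}
    (S : Set (ι → α)) {s : Set α} (hs : MeasurableSet s) (n : ℕ) {F : Measure α → ℝ≥0∞}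
    (hF : Measurable F) :
    ∫⁻ x in S, {ν : Measure α | (n : ℝ≥0∞) ≤ ν s}.indicator F (∑ i, dirac (x i)) ∂μ ≤
      ∑ σ : Fin n ↪ ι, ∫⁻ x in {y : ι → α | ∀ j, y (σ j) ∈ s} ∩ S, F (∑ i, dirac (x i)) ∂μ := by
  calc _ ≤ ∫⁻ x in S, ∑ σ : Fin n ↪ ι,
        {y : ι → α | ∀ j, y (σ j) ∈ s}.indicator (fun y => F (∑ i, dirac (y i))) x ∂μ :=
        lintegral_mono fun x => indicator_le_sum_indicator_embedding hs n F x
    _ = _ := by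
      rw [lintegral_finsetSum]
      · exact Finset.sum_congr rfl fun σ _ =>
          setLIntegral_indicator (measurableSet_setOf_forall_mem σ hs) _
      · exact fun σ _ =>
          (hF.comp measurable_sum_dirac).indicator (measurableSet_setOf_forall_mem σ hs)

lemma setLIntegral_indicator_eq_zero_of_lt {k n : ℕ} (hkn : k < n) {μ : Measure (Fin k → α)}
    (S : Set (Fin k → α)) {s : Set α} (hs : MeasurableSet s) {F : Measure α → ℝ≥0∞}
    (hF : Measurable F) :
    ∫⁻ x in S, {ν : Measure α | (n : ℝ≥0∞) ≤ ν s}.indicator F (∑ i, dirac (x i)) ∂μ = 0 := by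
  have : IsEmpty (Fin n ↪ Fin k) := Function.Embedding.isEmpty_of_card_lt (by simpa using hkn)
  simpa using setLIntegral_indicator_le_sum_embedding S hs n hF

end MeasurableSpace

section MeasureSpace

variable {α : Type*} [MeasureSpace α] [SigmaFinite (volume : Measure α)]

lemma setLIntegral_sum_dirac_eq_lintegral_prod {κ ι η : Type*} [Fintype κ] [Fintype ι]
    [Fintype η] (e : κ ⊕ ι ≃ η) {Q B : Set α} (hBQ : B ⊆ Q) {F : Measure α → ℝ≥0∞}
    (hF : Measurable F) :
    ∫⁻ x in {x : η → α | ∀ j, x (e (.inr j)) ∈ B} ∩ {x | ∀ i, x i ∈ Q}, F (∑ i, dirac (x i)) =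
      ∫⁻ z in {z : ι → α | ∀ j, z j ∈ B}, ∫⁻ w in {w : κ → α | ∀ i, w i ∈ Q},
        F ((∑ i, dirac (w i)) + ∑ j, dirac (z j)) := by
  set E : (κ → α) × (ι → α) ≃ᵐ (η → α) :=
    (MeasurableEquiv.sumPiEquivProdPi fun _ => α).symm.trans
      (MeasurableEquiv.piCongrLeft (fun _ => α) e)
  have hE : MeasurePreserving E volume volume :=
    (volume_measurePreserving_piCongrLeft (fun _ : η => α) e).comp
      (volume_measurePreserving_sumPiEquivProdPi_symm (fun _ : κ ⊕ ι => α))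
  have hEl : ∀ p i, E p (e (.inl i)) = p.1 i := fun p i =>
    Equiv.piCongrLeft_sumInl (fun _ : η => α) e p.1 p.2 i
  have hEr : ∀ p j, E p (e (.inr j)) = p.2 j := fun p j =>
    Equiv.piCongrLeft_sumInr (fun _ : η => α) e p.1 p.2 j
  have hsum : ∀ p, ∑ i, dirac (E p i) = (∑ i, dirac (p.1 i)) + ∑ j, dirac (p.2 j) := by
    intro p
    rw [← e.sum_comp, Fintype.sum_sum_type]
    simp only [hEl, hEr]
  have hpre : E ⁻¹' ({x | ∀ j, x (e (.inr j)) ∈ B} ∩ {x | ∀ i, x i ∈ Q}) =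
      {w : κ → α | ∀ i, w i ∈ Q} ×ˢ {z : ι → α | ∀ j, z j ∈ B} := by
    ext p
    simp only [Set.mem_preimage, Set.mem_inter_iff, Set.mem_ofPred_eq, Set.mem_prod,
      e.surjective.forall, Sum.forall, hEl, hEr]
    constructor
    · rintro ⟨hB, hQ, -⟩
      exact ⟨hQ, hB⟩
    · rintro ⟨hQ, hB⟩
      exact ⟨hB, hQ, fun j => hBQ (hB j)⟩
  rw [← hE.setLIntegral_comp_preimage_emb E.measurableEmbedding, hpre, volume_eq_prod,
    ← prod_restrict]
  simp only [hsum]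
  exact lintegral_prod_symm _ (hF.comp
    (((measurable_sum_dirac (ι := κ)).comp measurable_fst).add
      ((measurable_sum_dirac (ι := ι)).comp measurable_snd))).aemeasurable

lemma setLIntegral_indicator_le_descFactorial_mul {Q B : Set α} (hB : MeasurableSet B)
    (hBQ : B ⊆ Q) {F : Measure α → ℝ≥0∞} (hF : Measurable F) (m n : ℕ) :
    ∫⁻ x in {x : Fin (m + n) → α | ∀ i, x i ∈ Q},
        {ν : Measure α | (n : ℝ≥0∞) ≤ ν B}.indicator F (∑ i, dirac (x i)) ≤
      (m + n).descFactorial n * ∫⁻ z in {z : Fin n → α | ∀ j, z j ∈ B},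
        ∫⁻ w in {w : Fin m → α | ∀ i, w i ∈ Q}, F ((∑ i, dirac (w i)) + ∑ j, dirac (z j)) := by
  calc _ ≤ _ := setLIntegral_indicator_le_sum_embedding _ hB n hF
    _ = ∑ _σ : Fin n ↪ Fin (m + n), ∫⁻ z in {z : Fin n → α | ∀ j, z j ∈ B},
          ∫⁻ w in {w : Fin m → α | ∀ i, w i ∈ Q},
            F ((∑ i, dirac (w i)) + ∑ j, dirac (z j)) := by
      refine Finset.sum_congr rfl fun σ _ => ?_
      obtain ⟨e, he⟩ := σ.exists_sumEquiv_apply_inr (κ := Fin m) (by simp)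
      simp_rw [← he]
      exact setLIntegral_sum_dirac_eq_lintegral_prod e hBQ hF
    _ = _ := by
      rw [Finset.sum_const, Finset.card_univ, Fintype.card_embedding_eq, nsmul_eq_mul]
      simp

end MeasureSpace

lemma ofReal_pow_div_factorial_mul_descFactorial {ρ : ℝ} (hρ : 0 ≤ ρ) (m n : ℕ) :
    ENNReal.ofReal (ρ ^ (m + n) / (m + n).factorial) * (m + n).descFactorial n =
      ENNReal.ofReal (ρ ^ n) * ENNReal.ofReal (ρ ^ m / m.factorial) := by
  rw [← ENNReal.ofReal_natCast, ← ENNReal.ofReal_mul (by positivity),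
    ← ENNReal.ofReal_mul (by positivity)]
  congr 1
  have hfac : ((m + n).factorial : ℝ) = m.factorial * (m + n).descFactorial n := by
    have := Nat.factorial_mul_descFactorial (Nat.le_add_left n m)
    rw [Nat.add_sub_cancel] at this
    exact_mod_cast this.symm
  have hdesc : ((m + n).descFactorial n : ℝ) ≠ 0 := by
    exact_mod_cast (Nat.descFactorial_pos.2 (Nat.le_add_left n m)).ne'
  rw [hfac, pow_add]
  field_simp

lemma lintegral_poissonExp {β : Type*} [MeasurableSpace β] {ν : Measure β} {d : ℕ} (ρ : ℝ)
    (Q : Set (Fin d → ℝ)) {G : β → Measure (Fin d → ℝ) → ℝ≥0∞}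
    (hG : Measurable (Function.uncurry G)) :
    ∫⁻ y, poissonExp d ρ Q (G y) ∂ν =
      ENNReal.ofReal (Real.exp (-(ρ * (volume Q).toReal))) *
        ∑' k : ℕ, ENNReal.ofReal (ρ ^ k / k.factorial) *
          ∫⁻ y, (∫⁻ x in {x : Fin k → (Fin d → ℝ) | ∀ i, x i ∈ Q}, G y (∑ i, dirac (x i))) ∂ν := by
  have hmeas : ∀ k : ℕ, Measurable fun y =>
      ∫⁻ x in {x : Fin k → (Fin d → ℝ) | ∀ i, x i ∈ Q}, G y (∑ i, dirac (x i)) := fun k =>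
    (hG.comp (measurable_fst.prodMk (measurable_sum_dirac.comp measurable_snd))
      ).lintegral_prod_right'
  unfold poissonExp
  rw [lintegral_const_mul _ (.tsum fun k => (hmeas k).const_mul _),
    lintegral_tsum fun k => ((hmeas k).const_mul _).aemeasurable]
  simp_rw [lintegral_const_mul _ (hmeas _)]

theorem poisson_many_particles_bound_general
    {d : ℕ} (ρ : ℝ) (hρ : 0 < ρ)
    (Q : Set (Fin d → ℝ))
    (B : Set (Fin d → ℝ)) (hB : MeasurableSet B) (hBQ : B ⊆ Q)
    (n : ℕ)
    (F : Measure (Fin d → ℝ) → ℝ≥0∞) (hF : Measurable F) :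
    poissonExp d ρ Q
        (fun μ => Set.indicator {ν : Measure (Fin d → ℝ) | (n : ℝ≥0∞) ≤ ν B} F μ) ≤
      ENNReal.ofReal (ρ ^ n) *
        ∫⁻ y in {z : Fin n → (Fin d → ℝ) | ∀ i, z i ∈ B},
          poissonExp d ρ Q (fun μ => F (μ + ∑ i, Measure.dirac (y i))) := by
  have hG : Measurable fun p : (Fin n → (Fin d → ℝ)) × Measure (Fin d → ℝ) =>
      F (p.2 + ∑ i, dirac (p.1 i)) :=
    hF.comp (measurable_snd.add (measurable_sum_dirac.comp measurable_fst))
  rw [lintegral_poissonExp (ν := volume.restrict {z : Fin n → (Fin d → ℝ) | ∀ i, z i ∈ B}) ρ Q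
    (G := fun y μ => F (μ + ∑ i, dirac (y i))) hG]
  unfold poissonExp
  rw [← ENNReal.summable.sum_add_tsum_nat_add' (k := n), Finset.sum_eq_zero fun k hk => by
    rw [setLIntegral_indicator_eq_zero_of_lt (Finset.mem_range.1 hk) _ hB hF, mul_zero],
    zero_add, mul_left_comm, ← ENNReal.tsum_mul_left (a := ENNReal.ofReal (ρ ^ n))]
  refine mul_le_mul_right (ENNReal.tsum_le_tsum fun m => ?_) _
  calc _ ≤ _ := mul_le_mul_right (setLIntegral_indicator_le_descFactorial_mul hB hBQ hF m n) _
    _ = _ := by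
      rw [← mul_assoc, ofReal_pow_div_factorial_mul_descFactorial hρ.le, mul_assoc]

/-- `E_ρ^Q[F(μ)·1{μ(B) ≥ n}] ≤ ρ^n ∫_{B^n} E_ρ^Q[F(μ + δ_{y₁} + ⋯ + δ_{y_n})] dy₁⋯dy_n`. -/
theorem poisson_many_particles_bound
    {d : ℕ} (hd : 1 ≤ d) (ρ : ℝ) (hρ : 0 < ρ)
    (Q : Set (Fin d → ℝ)) (hQ : MeasurableSet Q) (hQb : Bornology.IsBounded Q)
    (B : Set (Fin d → ℝ)) (hB : MeasurableSet B) (hBQ : B ⊆ Q)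
    (n : ℕ)
    (F : Measure (Fin d → ℝ) → ℝ≥0∞) (hF : Measurable F) :
    poissonExp d ρ Q
        (fun μ => Set.indicator {ν : Measure (Fin d → ℝ) | (n : ℝ≥0∞) ≤ ν B} F μ) ≤
      ENNReal.ofReal (ρ ^ n) *
        ∫⁻ y in {z : Fin n → (Fin d → ℝ) | ∀ i, z i ∈ B},
          poissonExp d ρ Q (fun μ => F (μ + ∑ i, Measure.dirac (y i))) :=
  poisson_many_particles_bound_general ρ hρ Q B hB hBQ n F hF
end

section
/- Let k ≥ 1, M ≥ 0, C ≥ 0, let f : (0,∞) → ℝ and let c₁,…,c_k : (0,∞) → ℝ satisfy |c_j(ρ₀)| ≤ M for all 1 ≤ j ≤ k and ρ₀ > 0. Assume the uniform one-sided expansion: |f(ρ₀ + ρ) − f(ρ₀) − ∑_{j=1}^{k} c_j(ρ₀) ρ^j / j!| ≤ C ρ^{k+1} for all ρ₀ > 0 and ρ ∈ (0,1]. Then there exists a constant C′ depending only on k, M and C such that for every 1 ≤ ℓ ≤ k, every ρ₀ > 0 and every ρ ∈ (0, 1/k]: |Δ^{ℓ,ρ}f(ρ₀) − c_ℓ(ρ₀)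 ρ^ℓ| ≤ C′ ρ^{ℓ+1}. -/
/-!
`Δ^{ℓ,ρ}` annihilates polynomials of degree `< ℓ` and sends `(t - x)^ℓ` to `ℓ! ρ^ℓ`, so applying
it to the Taylor expansion of `f` at `x` leaves `c_ℓ ρ^ℓ`, the higher Taylor terms and the
remainder. `Δ^{ℓ,ρ} g (x)` samples `g` only at `x + iρ` with `iρ ≤ kρ ≤ 1`, with weights of total
mass `2^ℓ`, so those last two contributions are `O((kρ)^{ℓ+1})`.
-/

/-- The `ℓ`-th order forward difference of `g` at `x` with step size `ρ`. -/
noncomputable def forwardDiff (g : ℝ → ℝ) (ℓ : ℕ) (ρ : ℝ) (x : ℝ) : ℝ :=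
  ∑ i ∈ Finset.range (ℓ + 1),
    (ℓ.choose i : ℝ) * (-1 : ℝ) ^ (ℓ - i) * g (x + (i : ℝ) * ρ)

open Finset fwdDiff
open scoped Nat

-- Mathlib's `Δ_[h]^[n]` must be written `Δ_[h] ^[n]` here: `]^` is a token of full Mathlib.

section FwdDiff

variable {M R : Type*} [AddCommMonoid M] [Ring R]

lemma fwdDiff_iter_const {G : Type*} [AddCommGroup G] (h : M) (b : G) {ℓ : ℕ} (hℓ : ℓ ≠ 0) :
    Δ_[h] ^[ℓ] (fun _ : M ↦ b) = 0 := by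
  obtain ⟨m, rfl⟩ := Nat.exists_eq_succ_of_ne_zero hℓ
  rw [Function.iterate_succ_apply, fwdDiff_const]
  exact Function.iterate_fixed (fwdDiff_const h 0) m

lemma fwdDiff_iter_sum_mul {ι : Type*} (h : M) (s : Finset ι) (a : ι → R) (g : ι → M → R)
    (ℓ : ℕ) (y : M) :
    Δ_[h] ^[ℓ] (fun t ↦ ∑ i ∈ s, a i * g i t) y = ∑ i ∈ s, a i * Δ_[h] ^[ℓ] (g i) y := by
  have : (fun t ↦ ∑ i ∈ s, a i * g i t) = ∑ i ∈ s, a i • g i := by ext t; simp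
  simp [this, fwdDiff_iter_finsetSum, fwdDiff_iter_const_smul]

end FwdDiff

lemma forwardDiff_eq_fwdDiff_iter (g : ℝ → ℝ) (ℓ : ℕ) (ρ x : ℝ) :
    forwardDiff g ℓ ρ x = Δ_[ρ] ^[ℓ] g x := by
  rw [fwdDiff_iter_eq_sum_shift, forwardDiff]
  refine sum_congr rfl fun i _ ↦ ?_
  rw [zsmul_eq_mul, nsmul_eq_mul]
  push_cast
  ring

lemma abs_fwdDiff_iter_le (g : ℝ → ℝ) (ℓ : ℕ) (ρ x B : ℝ)
    (hB : ∀ i ≤ ℓ, |g (x + i * ρ)| ≤ B) : |Δ_[ρ] ^[ℓ] g x| ≤ 2 ^ ℓ * B := by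
  rw [fwdDiff_iter_eq_sum_shift]
  calc _ ≤ ∑ i ∈ range (ℓ + 1), (ℓ.choose i : ℝ) * B := by
        refine (abs_sum_le_sum_abs _ _).trans (sum_le_sum fun i hi ↦ ?_)
        rw [zsmul_eq_mul, abs_mul, nsmul_eq_mul]
        push_cast
        rw [abs_mul, abs_pow, abs_neg, abs_one, one_pow, one_mul, Nat.abs_cast]
        exact mul_le_mul_of_nonneg_left (hB i (by simpa [Nat.lt_succ_iff] using hi)) (by positivity)
    _ = 2 ^ ℓ * B := by
        rw [← sum_mul]
        exact_mod_cast congrArg (fun n : ℕ ↦ (n : ℝ) * B) (Nat.sum_range_choose ℓ)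

section Monomial

variable {ℓ j : ℕ} {ρ x : ℝ}

lemma fwdDiff_iter_pow_sub (ℓ j : ℕ) (ρ x : ℝ) :
    Δ_[ρ] ^[ℓ] (fun t ↦ (t - x) ^ j) x = ρ ^ j * Δ_[1] ^[ℓ] (fun r : ℝ ↦ r ^ j) 0 := by
  rw [fwdDiff_iter_eq_sum_shift, fwdDiff_iter_eq_sum_shift, mul_sum]
  refine sum_congr rfl fun i _ ↦ ?_
  rw [zsmul_eq_mul, zsmul_eq_mul, nsmul_eq_mul, nsmul_eq_mul, add_sub_cancel_left, zero_add]
  ring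

lemma fwdDiff_iter_pow_sub_of_lt (h : j < ℓ) : Δ_[ρ] ^[ℓ] (fun t ↦ (t - x) ^ j) x = 0 := by
  rw [fwdDiff_iter_pow_sub, fwdDiff_iter_pow_eq_zero_of_lt h, Pi.zero_apply, mul_zero]

lemma fwdDiff_iter_pow_sub_self : Δ_[ρ] ^[ℓ] (fun t ↦ (t - x) ^ ℓ) x = ℓ ! * ρ ^ ℓ := by
  rw [fwdDiff_iter_pow_sub, fwdDiff_iter_eq_factorial, Pi.natCast_apply, mul_comm]

lemma abs_fwdDiff_iter_pow_sub_le (hρ : 0 ≤ ρ) :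
    |Δ_[ρ] ^[ℓ] (fun t ↦ (t - x) ^ j) x| ≤ 2 ^ ℓ * (ℓ * ρ) ^ j :=
  abs_fwdDiff_iter_le _ _ _ _ _ fun i hi ↦ by
    rw [add_sub_cancel_left, abs_pow, abs_of_nonneg (by positivity)]
    gcongr

end Monomial

lemma abs_fwdDiff_iter_taylor_sub_le {k ℓ : ℕ} {M ρ x : ℝ} (c : ℕ → ℝ)
    (hc : ∀ j ∈ Icc 1 k, |c j| ≤ M) (hℓ : ℓ ∈ Icc 1 k) (hρ : 0 ≤ ρ) (hkρ : k * ρ ≤ 1) :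
    |Δ_[ρ] ^[ℓ] (fun t ↦ ∑ j ∈ Icc 1 k, c j * (t - x) ^ j / j !) x - c ℓ * ρ ^ ℓ| ≤
      k * (M * (2 ^ ℓ * (k * ρ) ^ (ℓ + 1))) := by
  have hM : 0 ≤ M := (abs_nonneg _).trans (hc ℓ hℓ)
  have hδ : c ℓ * ρ ^ ℓ = ∑ j ∈ Icc 1 k, if j = ℓ then c ℓ * ρ ^ ℓ else 0 := by
    rw [sum_ite_eq' _ _ _, if_pos hℓ]
  have hterm : ∀ j ∈ Icc 1 k, |c j / j ! * Δ_[ρ] ^[ℓ] (fun t ↦ (t - x) ^ j) x -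
      if j = ℓ then c ℓ * ρ ^ ℓ else 0| ≤ M * (2 ^ ℓ * (k * ρ) ^ (ℓ + 1)) := by
    intro j hj
    rcases lt_trichotomy j ℓ with hjℓ | rfl | hℓj
    · rw [fwdDiff_iter_pow_sub_of_lt hjℓ, if_neg hjℓ.ne, mul_zero, sub_zero, abs_zero]
      positivity
    · rw [fwdDiff_iter_pow_sub_self, if_pos rfl, ← mul_assoc,
        div_mul_cancel₀ _ (by positivity), sub_self, abs_zero]
      positivity
    · rw [if_neg hℓj.ne', sub_zero, abs_mul]
      have hcj : |c j / j !| ≤ M := by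
        rw [abs_div, Nat.abs_cast]
        exact (div_le_self (abs_nonneg _) (by exact_mod_cast j.factorial_pos)).trans (hc j hj)
      have hΔ : |Δ_[ρ] ^[ℓ] (fun t ↦ (t - x) ^ j) x| ≤ 2 ^ ℓ * (k * ρ) ^ (ℓ + 1) := by
        refine (abs_fwdDiff_iter_pow_sub_le hρ).trans ?_
        have hℓk : (ℓ : ℝ) ≤ k := by exact_mod_cast (mem_Icc.mp hℓ).2
        gcongr 2 ^ ℓ * ?_
        calc (ℓ * ρ) ^ j ≤ (k * ρ) ^ j := by gcongr
          _ ≤ (k * ρ) ^ (ℓ + 1) := pow_le_pow_of_le_one (by positivity) hkρ hℓj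
      exact mul_le_mul hcj hΔ (abs_nonneg _) hM
  simp_rw [mul_div_right_comm _ _ (_ ! : ℝ)]
  rw [fwdDiff_iter_sum_mul, hδ, ← sum_sub_distrib]
  calc _ ≤ _ := abs_sum_le_sum_abs _ _
    _ ≤ ∑ _j ∈ Icc 1 k, M * (2 ^ ℓ * (k * ρ) ^ (ℓ + 1)) := sum_le_sum hterm
    _ = _ := by simp

lemma abs_sub_taylor_le {f : ℝ → ℝ} {c : ℕ → ℝ} {k : ℕ} {C x s t : ℝ}
    (hf : ∀ r, 0 < r → r ≤ 1 →
      |f (x + r) - f x - ∑ j ∈ Icc 1 k, c j * r ^ j / j !| ≤ C * r ^ (k + 1))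
    (hC : 0 ≤ C) (ht : 0 ≤ t) (hts : t ≤ s) (hs : s ≤ 1) :
    |f (x + t) - f x - ∑ j ∈ Icc 1 k, c j * t ^ j / j !| ≤ C * s ^ (k + 1) := by
  rcases ht.eq_or_lt with rfl | ht
  · have : ∀ j ∈ Icc 1 k, c j * 0 ^ j / j ! = 0 := fun j hj ↦ by
      rw [zero_pow (by have := (mem_Icc.mp hj).1; omega), mul_zero, zero_div]
    rw [sum_eq_zero this, add_zero, sub_self, sub_zero, abs_zero]
    positivity
  · exact (hf t ht (hts.trans hs)).trans (by gcongr)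

theorem forward_difference_expansion_general (k : ℕ) (M C : ℝ)
    (hM : 0 ≤ M) (hC : 0 ≤ C) :
    ∃ C' : ℝ, 0 ≤ C' ∧
      ∀ (f : ℝ → ℝ) (c : ℕ → ℝ → ℝ),
        (∀ j : ℕ, 1 ≤ j → j ≤ k → ∀ ρ₀ : ℝ, 0 < ρ₀ → |c j ρ₀| ≤ M) →
        (∀ ρ₀ : ℝ, 0 < ρ₀ → ∀ ρ : ℝ, 0 < ρ → ρ ≤ 1 →
          |f (ρ₀ + ρ) - f ρ₀ -
              ∑ j ∈ Finset.Icc 1 k, c j ρ₀ * ρ ^ j / (Nat.factorial j : ℝ)| ≤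
            C * ρ ^ (k + 1)) →
        ∀ ℓ : ℕ, 1 ≤ ℓ → ℓ ≤ k → ∀ ρ₀ : ℝ, 0 < ρ₀ →
          ∀ ρ : ℝ, 0 < ρ → ρ ≤ 1 / (k : ℝ) →
            |forwardDiff f ℓ ρ ρ₀ - c ℓ ρ₀ * ρ ^ ℓ| ≤ C' * ρ ^ (ℓ + 1) := by
  refine ⟨2 ^ k * (k * M + C) * k ^ (k + 1), by positivity, ?_⟩
  intro f c hc hf ℓ hℓ hℓk x hx ρ hρ hρk
  have hk : (1 : ℝ) ≤ k := by exact_mod_cast hℓ.trans hℓk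
  have hkρ : k * ρ ≤ 1 := by rwa [le_div_iff₀' (by positivity)] at hρk
  set T : ℝ → ℝ := fun t ↦ ∑ j ∈ Icc 1 k, c j x * (t - x) ^ j / (j ! : ℝ)
  have hsplit : f = (fun _ ↦ f x) + T + fun t ↦ f t - f x - T t := by
    ext t
    simp only [Pi.add_apply]
    ring
  have hT := abs_fwdDiff_iter_taylor_sub_le (x := x) (c · x)
    (fun j hj ↦ hc j (mem_Icc.mp hj).1 (mem_Icc.mp hj).2 x hx) (mem_Icc.mpr ⟨hℓ, hℓk⟩) hρ.le hkρ
  have hR : |Δ_[ρ] ^[ℓ] (fun t ↦ f t - f x - T t) x| ≤ 2 ^ ℓ * (C * (k * ρ) ^ (k + 1)) :=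
    abs_fwdDiff_iter_le _ _ _ _ _ fun i hi ↦ by
      simpa only [T, add_sub_cancel_left] using abs_sub_taylor_le (hf x hx) hC (by positivity)
        (by gcongr; exact_mod_cast hi.trans hℓk) hkρ
  rw [forwardDiff_eq_fwdDiff_iter, hsplit, fwdDiff_iter_add, fwdDiff_iter_add,
    fwdDiff_iter_const _ _ (by omega)]
  calc _ = |Δ_[ρ] ^[ℓ] T x - c ℓ x * ρ ^ ℓ + Δ_[ρ] ^[ℓ] (fun t ↦ f t - f x - T t) x| := by
        rw [Pi.add_apply, Pi.add_apply, Pi.zero_apply, zero_add, add_sub_right_comm]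
    _ ≤ k * (M * (2 ^ ℓ * (k * ρ) ^ (ℓ + 1))) + 2 ^ ℓ * (C * (k * ρ) ^ (ℓ + 1)) := by
        refine (abs_add_le _ _).trans (add_le_add hT (hR.trans ?_))
        gcongr 2 ^ ℓ * (C * ?_)
        exact pow_le_pow_of_le_one (by positivity) hkρ (by omega)
    _ = 2 ^ ℓ * (k * M + C) * k ^ (ℓ + 1) * ρ ^ (ℓ + 1) := by ring
    _ ≤ 2 ^ k * (k * M + C) * k ^ (k + 1) * ρ ^ (ℓ + 1) := by
        gcongr
        norm_num

/-- a uniform one-sided `k`-th order expansion of `f` with coefficient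
functions bounded by `M` implies, with a constant `C'` depending only on `k`, `M`, `C`,
that `|Δ^{ℓ,ρ}f(ρ₀) − c_ℓ(ρ₀) ρ^ℓ| ≤ C' ρ^{ℓ+1}` for all `1 ≤ ℓ ≤ k`, `ρ₀ > 0` and
`ρ ∈ (0, 1/k]`. -/
theorem forward_difference_expansion (k : ℕ) (hk : 1 ≤ k) (M C : ℝ)
    (hM : 0 ≤ M) (hC : 0 ≤ C) :
    ∃ C' : ℝ, 0 ≤ C' ∧
      ∀ (f : ℝ → ℝ) (c : ℕ → ℝ → ℝ),
        (∀ j : ℕ, 1 ≤ j → j ≤ k → ∀ ρ₀ : ℝ, 0 < ρ₀ → |c j ρ₀| ≤ M) →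
        (∀ ρ₀ : ℝ, 0 < ρ₀ → ∀ ρ : ℝ, 0 < ρ → ρ ≤ 1 →
          |f (ρ₀ + ρ) - f ρ₀ -
              ∑ j ∈ Finset.Icc 1 k, c j ρ₀ * ρ ^ j / (Nat.factorial j : ℝ)| ≤
            C * ρ ^ (k + 1)) →
        ∀ ℓ : ℕ, 1 ≤ ℓ → ℓ ≤ k → ∀ ρ₀ : ℝ, 0 < ρ₀ →
          ∀ ρ : ℝ, 0 < ρ → ρ ≤ 1 / (k : ℝ) →
            |forwardDiff f ℓ ρ ρ₀ - c ℓ ρ₀ * ρ ^ ℓ| ≤ C' * ρ ^ (ℓ + 1) :=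
  forward_difference_expansion_general k M C hM hC
end

section
/- Let f, c : (0,∞) → ℝ and C ≥ 0 be such that |f(ρ₀ + ρ) − f(ρ₀) − c(ρ₀) ρ| ≤ C ρ² for all ρ₀ > 0 and ρ ∈ (0,1]. Then f is differentiable on (0,∞) with derivative f′(ρ₀) = c(ρ₀) for every ρ₀ > 0, and c is locally Lipschitz with a uniform constant: there exists C′ depending only on C such that |c(ρ₁) − c(ρ₀)| ≤ C′ |ρ₁ − ρ₀| for all ρ₀, ρ₁ > 0 with |ρ₁ − ρ₀| ≤ 1/2. -/
/-- a uniform one-sided first-order expansion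
`|f(ρ₀+ρ) − f(ρ₀) − c(ρ₀)ρ| ≤ Cρ²` (for all `ρ₀ > 0`, `ρ ∈ (0,1]`) implies that `f` is
differentiable on `(0,∞)` with derivative `c`, and `c` is Lipschitz with a constant `C'`
depending only on `C`, on pairs of positive points at distance at most `1/2`. -/
theorem c11_regularity_core (C : ℝ) (hC : 0 ≤ C) :
    ∃ C' : ℝ, 0 ≤ C' ∧
      ∀ (f c : ℝ → ℝ),
        (∀ ρ₀ : ℝ, 0 < ρ₀ → ∀ ρ : ℝ, 0 < ρ → ρ ≤ 1 →
          |f (ρ₀ + ρ) - f ρ₀ - c ρ₀ * ρ| ≤ C * ρ ^ 2) →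
        (∀ ρ₀ : ℝ, 0 < ρ₀ → HasDerivAt f (c ρ₀) ρ₀) ∧
        (∀ ρ₀ ρ₁ : ℝ, 0 < ρ₀ → 0 < ρ₁ → |ρ₁ - ρ₀| ≤ 1 / 2 →
          |c ρ₁ - c ρ₀| ≤ C' * |ρ₁ - ρ₀|) := by
  refine ⟨6 * C, by linarith, fun f c hf => ?_⟩
  -- one-sided Lipschitz bound
  have lip1 : ∀ ρ₀ ρ₁ : ℝ, 0 < ρ₀ → 0 < ρ₁ → ρ₀ < ρ₁ → ρ₁ - ρ₀ ≤ 1 / 2 →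
      |c ρ₁ - c ρ₀| ≤ 6 * C * (ρ₁ - ρ₀) := by
    intro ρ₀ ρ₁ h0 h1 hlt hle
    set h := ρ₁ - ρ₀ with hh
    have hpos : 0 < h := by simp [hh]; linarith
    have E1 := hf ρ₀ h0 (2 * h) (by linarith) (by linarith)
    have E2 := hf ρ₁ h1 h hpos (by linarith)
    have E3 := hf ρ₀ h0 h hpos (by linarith)
    have e1 : ρ₀ + 2 * h = ρ₁ + h := by rw [hh]; ring
    have e3 : ρ₀ + h = ρ₁ := by rw [hh]; ring
    rw [e1] at E1
    rw [e3] at E3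
    have key : |(c ρ₁ - c ρ₀) * h| ≤ 6 * C * h ^ 2 := by
      rw [abs_le] at E1 E2 E3 ⊢
      constructor <;> nlinarith [E1.1, E1.2, E2.1, E2.2, E3.1, E3.2]
    rw [abs_mul, abs_of_pos hpos] at key
    exact le_of_mul_le_mul_right (by nlinarith [key]) hpos
  -- symmetric Lipschitz bound
  have lip : ∀ ρ₀ ρ₁ : ℝ, 0 < ρ₀ → 0 < ρ₁ → |ρ₁ - ρ₀| ≤ 1 / 2 →
      |c ρ₁ - c ρ₀| ≤ 6 * C * |ρ₁ - ρ₀| := by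
    intro ρ₀ ρ₁ h0 h1 hle
    rcases lt_trichotomy ρ₀ ρ₁ with hlt | heq | hgt
    · rw [show |ρ₁ - ρ₀| = ρ₁ - ρ₀ from abs_of_pos (by linarith)] at hle ⊢
      exact lip1 ρ₀ ρ₁ h0 h1 hlt hle
    · simp [heq]
    · rw [show |ρ₁ - ρ₀| = ρ₀ - ρ₁ by rw [abs_sub_comm]; exact abs_of_pos (by linarith)] at hle ⊢
      rw [abs_sub_comm]
      exact lip1 ρ₁ ρ₀ h1 h0 hgt hle
  -- two-sided quadratic estimate
  have key : ∀ ρ₀ y : ℝ, 0 < ρ₀ → 0 < y → |y - ρ₀| ≤ 1 / 2 →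
      |f y - f ρ₀ - c ρ₀ * (y - ρ₀)| ≤ 7 * C * (y - ρ₀) ^ 2 := by
    intro ρ₀ y h0 hy hle
    rcases lt_trichotomy ρ₀ y with hlt | heq | hgt
    · have habs : |y - ρ₀| = y - ρ₀ := abs_of_pos (by linarith)
      rw [habs] at hle
      have := hf ρ₀ h0 (y - ρ₀) (by linarith) (by linarith)
      rw [show ρ₀ + (y - ρ₀) = y by ring] at this
      nlinarith [sq_nonneg (y - ρ₀)]
    · simp [heq]
    · have habs : |y - ρ₀| = ρ₀ - y := by rw [abs_sub_comm]; exact abs_of_pos (by linarith)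
      rw [habs] at hle
      have E := hf y hy (ρ₀ - y) (by linarith) (by linarith)
      rw [show y + (ρ₀ - y) = ρ₀ by ring] at E
      have L : |c y - c ρ₀| ≤ 6 * C * (ρ₀ - y) := by
        have := lip y ρ₀ hy h0
          (by rw [show |ρ₀ - y| = ρ₀ - y from abs_of_pos (by linarith)]; exact hle)
        rw [show |ρ₀ - y| = ρ₀ - y from abs_of_pos (by linarith), abs_sub_comm] at this
        exact this
      have eq : f y - f ρ₀ - c ρ₀ * (y - ρ₀) =
          -((f ρ₀ - f y - c y * (ρ₀ - y)) + (c y - c ρ₀) * (ρ₀ - y)) := by ring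
      rw [eq, abs_neg]
      calc |(f ρ₀ - f y - c y * (ρ₀ - y)) + (c y - c ρ₀) * (ρ₀ - y)|
          ≤ |f ρ₀ - f y - c y * (ρ₀ - y)| + |(c y - c ρ₀) * (ρ₀ - y)| := abs_add_le _ _
        _ ≤ C * (ρ₀ - y) ^ 2 + 6 * C * (ρ₀ - y) * (ρ₀ - y) := by
            refine add_le_add E ?_
            rw [abs_mul, abs_of_pos (by linarith : (0:ℝ) < ρ₀ - y)]
            exact mul_le_mul_of_nonneg_right L (by linarith)
        _ ≤ 7 * C * (y - ρ₀) ^ 2 := by nlinarith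
  refine ⟨?_, fun ρ₀ ρ₁ h0 h1 hle => lip ρ₀ ρ₁ h0 h1 hle⟩
  intro ρ₀ h0
  rw [hasDerivAt_iff_isLittleO, Asymptotics.isLittleO_iff]
  intro ε hε
  rw [Metric.eventually_nhds_iff]
  refine ⟨min (min (ρ₀ / 2) (1 / 2)) (ε / (7 * C + 1)), by positivity, fun y hy => ?_⟩
  rw [Real.dist_eq] at hy
  have h1 : |y - ρ₀| < ρ₀ / 2 :=
    lt_of_lt_of_le hy ((min_le_left _ _).trans (min_le_left _ _))
  have h2 : |y - ρ₀| ≤ 1 / 2 :=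
    le_of_lt (lt_of_lt_of_le hy ((min_le_left _ _).trans (min_le_right _ _)))
  have h3 : |y - ρ₀| < ε / (7 * C + 1) := lt_of_lt_of_le hy (min_le_right _ _)
  have hy0 : 0 < y := by
    have := abs_lt.mp h1; linarith [this.1]
  have hk := key ρ₀ y h0 hy0 h2
  simp only [Real.norm_eq_abs, smul_eq_mul]
  have h7 : (0:ℝ) < 7 * C + 1 := by linarith
  have hdiv : (7 * C) * |y - ρ₀| ≤ ε := by
    have : (7 * C + 1) * |y - ρ₀| ≤ ε := by
      rw [← le_div_iff₀' h7] at *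
      exact le_of_lt h3
    nlinarith [abs_nonneg (y - ρ₀)]
  calc |f y - f ρ₀ - (y - ρ₀) * c ρ₀| = |f y - f ρ₀ - c ρ₀ * (y - ρ₀)| := by ring_nf
    _ ≤ 7 * C * (y - ρ₀) ^ 2 := hk
    _ = 7 * C * |y - ρ₀| * |y - ρ₀| := by rw [← sq_abs]; ring
    _ ≤ ε * |y - ρ₀| := mul_le_mul_of_nonneg_right hdiv (abs_nonneg _)
end

section
/- Let k ≥ 1, M ≥ 0, C ≥ 0, let f : (0,∞) → ℝ and let c₁,…,c_k : (0,∞) → ℝ satisfy |c_j(ρ₀)| ≤ M for all 1 ≤ j ≤ k and ρ₀ > 0. Assume the uniform one-sided expansion: |f(ρ₀ + ρ) − f(ρ₀) − ∑_{j=1}^{k} c_j(ρ₀) ρ^j / j!| ≤ C ρ^{k+1} for all ρ₀ > 0 and ρ ∈ (0,1]. Then f is k times differentiable on (0,∞) and its j-th derivative equals c_j for every 1 ≤ j ≤ k; moreover there exists C′ depending only on k, M and C such that each c_j satisfies |c_j(ρ₁) − c_j(ρ₀)| ≤ C′ |ρ₁ − ρ₀| for all ρ₀, ρ₁ > 0 with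 |ρ₁ − ρ₀| ≤ 1/(2(k+1)). -/
/-!
Put `g 0 = f` and `g j = c j` for `j ≥ 1`, and let `T(x, s)` be the order-`k` expansion of `f`
at `x` with step `s`. Since `x + (t + 1) h = (x + h) + t h`, the polynomial
`t ↦ T(x, (t + 1) h) - T(x + h, t h)` of degree `≤ k` is `O(h ^ (k + 1))` at the nodes
`t = 0, …, k`, so by Lagrange interpolation all its coefficients are `O(h ^ (k + 1))`. Its
coefficient of `t ^ j` is `h ^ j / j !` times the defect of the order-`(k - j)` expansion of `g j`
at `x`; hence every `g j` has a uniform one-sided expansion with remainder `O(h ^ (k + 1 - j))`.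
With the bound on the `g j` this makes each `g j` Lipschitz, and then gives
`g j y - g j x - (y - x) g (j + 1) x = O((y - x) ^ 2)`, so `g (j + 1)` is the derivative of `g j`.
-/

open Finset Polynomial
open scoped Nat

theorem exists_abs_coeff_le_of_abs_eval_le (s : Finset ℝ) :
    ∃ Λ : ℝ, 0 ≤ Λ ∧ ∀ p : ℝ[X], p.degree < #s → ∀ R : ℝ, (∀ x ∈ s, |p.eval x| ≤ R) →
      ∀ j, |p.coeff j| ≤ Λ * R := by
  set b : ℝ → ℝ[X] := Lagrange.basis s id
  have hb : ∀ x j, |(b x).coeff j| ≤ ∑ m ∈ (b x).support, |(b x).coeff m| := fun x j => by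
    by_cases hj : j ∈ (b x).support
    · exact single_le_sum (f := fun m => |(b x).coeff m|) (fun m _ => abs_nonneg _) hj
    · rw [notMem_support_iff.mp hj, abs_zero]; positivity
  refine ⟨∑ x ∈ s, ∑ m ∈ (b x).support, |(b x).coeff m|, by positivity, fun p hp R hR j => ?_⟩
  have hcoeff : p.coeff j = ∑ x ∈ s, p.eval x * (b x).coeff j := by
    conv_lhs => rw [Lagrange.eq_interpolate (v := id) (Set.injOn_id _) hp]
    simp [b, Lagrange.interpolate_apply, coeff_C_mul]
  rw [hcoeff, sum_mul]
  refine (abs_sum_le_sum_abs _ _).trans (sum_le_sum fun x hx => ?_)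
  rw [abs_mul, mul_comm]
  exact mul_le_mul (hb x j) (hR x hx) (abs_nonneg _) (by positivity)

theorem hasDerivAt_of_abs_sub_le_sq {g : ℝ → ℝ} {a d K : ℝ}
    (H : ∀ᶠ x in nhds a, |g x - g a - (x - a) * d| ≤ K * (x - a) ^ 2) :
    HasDerivAt g d a := by
  rw [hasDerivAt_iff_isLittleO]
  refine (Asymptotics.IsBigO.of_bound K ?_).trans_isLittleO
    (Asymptotics.isLittleO_pow_sub_sub a one_lt_two)
  filter_upwards [H] with x hx
  simpa using hx

-- `g l` stands for the `l`-th derivative, so this is the order-`n` Taylor sum of `g j` at `x`.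
noncomputable def taylorSum (g : ℕ → ℝ → ℝ) (j n : ℕ) (x h : ℝ) : ℝ :=
  ∑ l ∈ range (n + 1), g (j + l) x * h ^ l / l !

@[simp] lemma taylorSum_zero_order (g : ℕ → ℝ → ℝ) (j : ℕ) (x h : ℝ) :
    taylorSum g j 0 x h = g j x := by
  simp [taylorSum]

lemma taylorSum_one_order (g : ℕ → ℝ → ℝ) (j : ℕ) (x h : ℝ) :
    taylorSum g j 1 x h = g j x + g (j + 1) x * h := by
  simp [taylorSum, sum_range_succ]

@[simp] lemma taylorSum_zero_increment (g : ℕ → ℝ → ℝ) (j n : ℕ) (x : ℝ) :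
    taylorSum g j n x 0 = g j x := by
  simp [taylorSum, sum_range_succ']

lemma taylorSum_update_zero (c : ℕ → ℝ → ℝ) (f : ℝ → ℝ) (k : ℕ) (x h : ℝ) :
    taylorSum (Function.update c 0 f) 0 k x h =
      f x + ∑ j ∈ Icc 1 k, c j x * h ^ j / (j ! : ℝ) := by
  rw [taylorSum, Nat.range_succ_eq_Icc_zero, Icc_eq_cons_Ioc k.zero_le, sum_cons,
    ← Icc_add_one_left_eq_Ioc, zero_add]
  refine congrArg₂ _ (by simp) (sum_congr rfl fun j hj => ?_)
  rw [zero_add, Function.update_of_ne (by grind)]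

lemma abs_taylorSum_sub_taylorSum_le_of_le {g : ℕ → ℝ → ℝ} {j m n : ℕ} {x h M : ℝ}
    (hmn : m ≤ n) (hh₀ : 0 ≤ h) (hh₁ : h ≤ 1) (hM : 0 ≤ M)
    (hg : ∀ l, m < l → l ≤ n → |g (j + l) x| ≤ M) :
    |taylorSum g j n x h - taylorSum g j m x h| ≤ n * M * h ^ (m + 1) := by
  have hterm : ∀ l ∈ Ico (m + 1) (n + 1), |g (j + l) x * h ^ l / l !| ≤ M * h ^ (m + 1) := by
    intro l hl
    rw [mem_Ico] at hl
    rw [abs_div, abs_mul, abs_pow, abs_of_nonneg hh₀, Nat.abs_cast]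
    calc |g (j + l) x| * h ^ l / l ! ≤ |g (j + l) x| * h ^ l :=
          div_le_self (by positivity) (by exact_mod_cast l.factorial_pos)
      _ ≤ M * h ^ (m + 1) :=
          mul_le_mul (hg l (by omega) (by omega)) (pow_le_pow_of_le_one hh₀ hh₁ (by omega))
            (by positivity) hM
  calc |taylorSum g j n x h - taylorSum g j m x h|
      = |∑ l ∈ Ico (m + 1) (n + 1), g (j + l) x * h ^ l / l !| := by
        rw [taylorSum, taylorSum, ← sum_range_add_sum_Ico _ (by omega : m + 1 ≤ n + 1),
          add_sub_cancel_left]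
    _ ≤ ∑ _l ∈ Ico (m + 1) (n + 1), M * h ^ (m + 1) :=
        (abs_sum_le_sum_abs _ _).trans (sum_le_sum hterm)
    _ = (n - m : ℕ) * (M * h ^ (m + 1)) := by simp
    _ ≤ n * M * h ^ (m + 1) := by
        rw [← mul_assoc]; gcongr; exact_mod_cast n.sub_le m

lemma sum_mul_choose_eq_taylorSum (g : ℕ → ℝ → ℝ) {j k : ℕ} (hjk : j ≤ k) (x h : ℝ) :
    ∑ i ∈ range (k + 1), g i x * h ^ i / i ! * i.choose j =
      h ^ j / j ! * taylorSum g j (k - j) x h := by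
  rw [show k + 1 = j + (k - j + 1) by omega, sum_range_add, taylorSum, mul_sum,
    sum_eq_zero fun i hi => by rw [Nat.choose_eq_zero_of_lt (mem_range.mp hi)]; simp, zero_add]
  refine sum_congr rfl fun l _ => ?_
  have hfac : ((l + j).choose j * l ! * j ! : ℝ) = (j + l)! := by
    rw [add_comm j]; exact_mod_cast Nat.add_choose_mul_factorial_mul_factorial l j
  rw [add_comm l j] at hfac
  field_simp
  rw [← hfac]
  ring

lemma exists_polynomial_taylorSum_sub_taylorSum (g : ℕ → ℝ → ℝ) {j k : ℕ} (hjk : j ≤ k)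
    (x h : ℝ) : ∃ P : ℝ[X], P.degree < ↑(k + 1) ∧
      (∀ t, P.eval t = taylorSum g 0 k x ((t + 1) * h) - taylorSum g 0 k (x + h) (t * h)) ∧
      P.coeff j = h ^ j / j ! * (taylorSum g j (k - j) x h - g j (x + h)) := by
  refine ⟨∑ i ∈ range (k + 1),
    (C (g i x * h ^ i / i !) * (X + 1) ^ i - C (g i (x + h) * h ^ i / i !) * X ^ i), ?_, ?_, ?_⟩
  · refine (degree_le_of_natDegree_le (natDegree_sum_le_of_forall_le _ _ fun i hi => ?_)).trans_lt
      (WithBot.coe_lt_coe.2 k.lt_succ_self)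
    have : i ≤ k := Nat.lt_succ_iff.mp (mem_range.mp hi)
    compute_degree
    all_goals omega
  · intro t
    simp only [eval_finsetSum, eval_sub, eval_mul, eval_C, eval_pow, eval_add, eval_X, eval_one,
      taylorSum, zero_add, ← sum_sub_distrib, mul_pow]
    refine sum_congr rfl fun i _ => by ring
  · simp only [finsetSum_coeff, coeff_sub, coeff_C_mul, coeff_X_add_one_pow, coeff_X_pow,
      sum_sub_distrib, sum_mul_choose_eq_taylorSum g hjk, mul_ite, mul_one, mul_zero,
      sum_ite_eq, mem_range, Nat.lt_succ_iff.2 hjk, if_true]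
    ring

lemma abs_taylorSum_sub_taylorSum_add_le {g : ℕ → ℝ → ℝ} {k : ℕ} {C : ℝ} (hC : 0 ≤ C)
    (hg : ∀ x, 0 < x → ∀ h, 0 < h → h ≤ 1 →
      |g 0 (x + h) - taylorSum g 0 k x h| ≤ C * h ^ (k + 1))
    {x h t : ℝ} (hx : 0 < x) (hh : 0 < h) (ht : 0 ≤ t) (hth : (t + 1) * h ≤ 1) :
    |taylorSum g 0 k x ((t + 1) * h) - taylorSum g 0 k (x + h) (t * h)| ≤
      2 * C * ((t + 1) * h) ^ (k + 1) := by
  have hg' : ∀ y, 0 < y → ∀ s, 0 ≤ s → s ≤ (t + 1) * h →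
      |g 0 (y + s) - taylorSum g 0 k y s| ≤ C * ((t + 1) * h) ^ (k + 1) := by
    intro y hy s hs₀ hs
    rcases hs₀.eq_or_lt with rfl | hs₀
    · simp; positivity
    · exact (hg y hy s hs₀ (hs.trans hth)).trans (by gcongr)
  have hsplit : x + (t + 1) * h = x + h + t * h := by ring
  calc |taylorSum g 0 k x ((t + 1) * h) - taylorSum g 0 k (x + h) (t * h)|
      = |(g 0 (x + h + t * h) - taylorSum g 0 k (x + h) (t * h)) -
          (g 0 (x + (t + 1) * h) - taylorSum g 0 k x ((t + 1) * h))| := by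
        rw [hsplit]; ring_nf
    _ ≤ C * ((t + 1) * h) ^ (k + 1) + C * ((t + 1) * h) ^ (k + 1) :=
        (abs_sub _ _).trans (add_le_add (hg' _ (by positivity) _ (by positivity) (by nlinarith))
          (hg' _ hx _ (by positivity) le_rfl))
    _ = 2 * C * ((t + 1) * h) ^ (k + 1) := by ring

-- `(k + 1) * h ≤ 1` keeps the steps `(m + 1) * h`, `m ≤ k`, of the interpolation inside `(0, 1]`.
def TaylorRemainderLE (g : ℕ → ℝ → ℝ) (k : ℕ) (K : ℝ) : Prop :=
  ∀ j ≤ k, ∀ x : ℝ, 0 < x → ∀ h : ℝ, 0 < h → (k + 1) * h ≤ 1 →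
    |g j (x + h) - taylorSum g j (k - j) x h| ≤ K * h ^ (k - j + 1)

lemma exists_taylorRemainderLE (k : ℕ) {C : ℝ} (hC : 0 ≤ C) :
    ∃ K, 0 ≤ K ∧ ∀ g : ℕ → ℝ → ℝ,
      (∀ x, 0 < x → ∀ h, 0 < h → h ≤ 1 →
        |g 0 (x + h) - taylorSum g 0 k x h| ≤ C * h ^ (k + 1)) →
      TaylorRemainderLE g k K := by
  set nodes : Finset ℝ := (range (k + 1)).image Nat.cast
  have hnodes : #nodes = k + 1 := by
    rw [card_image_of_injective _ Nat.cast_injective, card_range]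
  obtain ⟨Λ, hΛ, hcoeff⟩ := exists_abs_coeff_le_of_abs_eval_le nodes
  refine ⟨k ! * Λ * (2 * C * (k + 1) ^ (k + 1)), by positivity,
    fun g hg j hjk x hx h hh hkh => ?_⟩
  obtain ⟨P, hPdeg, hPeval, hPcoeff⟩ := exists_polynomial_taylorSum_sub_taylorSum g hjk x h
  have hnode : ∀ t ∈ nodes, |P.eval t| ≤ 2 * C * ((k + 1) * h) ^ (k + 1) := by
    simp only [nodes, mem_image, mem_range]
    rintro _ ⟨m, hm, rfl⟩
    have hmk : (m + 1 : ℝ) ≤ k + 1 := by exact_mod_cast hm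
    rw [hPeval]
    refine (abs_taylorSum_sub_taylorSum_add_le hC hg hx hh m.cast_nonneg
      ((mul_le_mul_of_nonneg_right hmk hh.le).trans hkh)).trans ?_
    gcongr
  have hpos : 0 < h ^ j / j ! := by positivity
  rw [← mul_le_mul_iff_left₀ hpos]
  calc |g j (x + h) - taylorSum g j (k - j) x h| * (h ^ j / j !) = |P.coeff j| := by
        rw [hPcoeff, abs_mul, abs_of_pos hpos, abs_sub_comm, mul_comm]
    _ ≤ Λ * (2 * C * ((k + 1) * h) ^ (k + 1)) := hcoeff P (hnodes ▸ hPdeg) _ hnode j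
    _ = Λ * (2 * C * (k + 1) ^ (k + 1)) * h ^ (k + 1) * 1 := by rw [mul_pow]; ring
    _ ≤ Λ * (2 * C * (k + 1) ^ (k + 1)) * h ^ (k + 1) * (k ! / j !) := by
        gcongr
        rw [one_le_div (by positivity)]
        exact_mod_cast Nat.factorial_le hjk
    _ = k ! * Λ * (2 * C * (k + 1) ^ (k + 1)) * h ^ (k - j + 1) * (h ^ j / j !) := by
        rw [← pow_mul_pow_sub h (by omega : j ≤ k + 1), show k + 1 - j = k - j + 1 by omega]
        ring

section TaylorRemainderLE

variable {g : ℕ → ℝ → ℝ} {k : ℕ} {M K : ℝ}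

lemma abs_sub_le_of_taylorRemainderLE (hM : 0 ≤ M) (hK : 0 ≤ K)
    (hg : ∀ i, 1 ≤ i → i ≤ k → ∀ x, 0 < x → |g i x| ≤ M) (hR : TaylorRemainderLE g k K)
    {j : ℕ} (hjk : j ≤ k) {x y : ℝ} (hx : 0 < x) (hy : 0 < y)
    (hxy : (k + 1) * |y - x| ≤ 1) :
    |g j y - g j x| ≤ (k * M + K) * |y - x| := by
  wlog hle : x ≤ y generalizing x y
  · simpa only [abs_sub_comm] using this hy hx (by rwa [abs_sub_comm]) (by linarith)
  obtain ⟨h, hh, rfl⟩ : ∃ h, 0 ≤ h ∧ y = x + h := ⟨y - x, by linarith, by ring⟩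
  rcases hh.eq_or_lt with rfl | hh
  · simp
  rw [add_sub_cancel_left, abs_of_pos hh] at *
  have hh₁ : h ≤ 1 := by nlinarith [(k.cast_nonneg : (0 : ℝ) ≤ k)]
  have htail := abs_taylorSum_sub_taylorSum_le_of_le (g := g) (j := j) (x := x)
    (k - j).zero_le hh.le hh₁ hM fun l hl hlk => hg (j + l) (by omega) (by omega) x hx
  rw [taylorSum_zero_order, zero_add, pow_one] at htail
  calc |g j (x + h) - g j x|
      ≤ |g j (x + h) - taylorSum g j (k - j) x h| + |taylorSum g j (k - j) x h - g j x| :=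
        abs_sub_le _ _ _
    _ ≤ K * h ^ (k - j + 1) + (k - j : ℕ) * M * h :=
        add_le_add (hR j hjk x hx h hh hxy) htail
    _ ≤ K * h + k * M * h := by
        have hkj : ((k - j : ℕ) : ℝ) ≤ k := by exact_mod_cast k.sub_le j
        gcongr
        exact pow_le_of_le_one hh.le hh₁ (by omega)
    _ = (k * M + K) * h := by ring

lemma abs_sub_taylorSum_one_le_of_taylorRemainderLE (hM : 0 ≤ M) (hK : 0 ≤ K)
    (hg : ∀ i, 1 ≤ i → i ≤ k → ∀ x, 0 < x → |g i x| ≤ M) (hR : TaylorRemainderLE g k K)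
    {j : ℕ} (hjk : j < k) {x h : ℝ} (hx : 0 < x) (hh : 0 ≤ h) (hkh : (k + 1) * h ≤ 1) :
    |g j (x + h) - taylorSum g j 1 x h| ≤ (k * M + K) * h ^ 2 := by
  rcases hh.eq_or_lt with rfl | hh
  · simp
  have hh₁ : h ≤ 1 := by nlinarith [(k.cast_nonneg : (0 : ℝ) ≤ k)]
  have htail := abs_taylorSum_sub_taylorSum_le_of_le (g := g) (j := j) (x := x)
    (by omega : 1 ≤ k - j) hh.le hh₁ hM fun l hl hlk => hg (j + l) (by omega) (by omega) x hx
  calc |g j (x + h) - taylorSum g j 1 x h|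
      ≤ |g j (x + h) - taylorSum g j (k - j) x h| +
          |taylorSum g j (k - j) x h - taylorSum g j 1 x h| := abs_sub_le _ _ _
    _ ≤ K * h ^ (k - j + 1) + (k - j : ℕ) * M * h ^ (1 + 1) :=
        add_le_add (hR j hjk.le x hx h hh hkh) htail
    _ ≤ K * h ^ 2 + k * M * h ^ 2 := by
        have hkj : ((k - j : ℕ) : ℝ) ≤ k := by exact_mod_cast k.sub_le j
        have hpow : h ^ (k - j + 1) ≤ h ^ 2 := pow_le_pow_of_le_one hh.le hh₁ (by omega)
        gcongr
    _ = (k * M + K) * h ^ 2 := by ring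

lemma abs_sub_sub_mul_le_of_taylorRemainderLE (hM : 0 ≤ M) (hK : 0 ≤ K)
    (hg : ∀ i, 1 ≤ i → i ≤ k → ∀ x, 0 < x → |g i x| ≤ M) (hR : TaylorRemainderLE g k K)
    {j : ℕ} (hjk : j < k) {x y : ℝ} (hx : 0 < x) (hy : 0 < y)
    (hxy : (k + 1) * |y - x| ≤ 1) :
    |g j y - g j x - (y - x) * g (j + 1) x| ≤ 2 * (k * M + K) * (y - x) ^ 2 := by
  rcases le_total x y with hle | hle
  · have hsecond := abs_sub_taylorSum_one_le_of_taylorRemainderLE hM hK hg hR hjk hx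
      (sub_nonneg.2 hle) (by rwa [abs_of_nonneg (sub_nonneg.2 hle)] at hxy)
    rw [add_sub_cancel, taylorSum_one_order] at hsecond
    rw [sub_sub, mul_comm (y - x)]
    linarith [mul_nonneg (by positivity : (0 : ℝ) ≤ k * M + K) (sq_nonneg (y - x))]
  -- For `y < x`, expand at `y` instead and correct with the Lipschitz bound on `g (j + 1)`.
  have hsecond := abs_sub_taylorSum_one_le_of_taylorRemainderLE hM hK hg hR hjk hy
    (sub_nonneg.2 hle) (by rwa [abs_sub_comm, abs_of_nonneg (sub_nonneg.2 hle)] at hxy)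
  have hlip := abs_sub_le_of_taylorRemainderLE hM hK hg hR hjk hy hx
    (by rwa [abs_sub_comm] at hxy)
  rw [add_sub_cancel, taylorSum_one_order] at hsecond
  calc |g j y - g j x - (y - x) * g (j + 1) x|
      = |(x - y) * (g (j + 1) x - g (j + 1) y) -
          (g j x - (g j y + g (j + 1) y * (x - y)))| := by
        ring_nf
    _ ≤ |x - y| * |g (j + 1) x - g (j + 1) y| +
          |g j x - (g j y + g (j + 1) y * (x - y))| := by
        rw [← abs_mul]; exact abs_sub _ _
    _ ≤ |x - y| * ((k * M + K) * |x - y|) + (k * M + K) * (x - y) ^ 2 :=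
        add_le_add (mul_le_mul_of_nonneg_left hlip (abs_nonneg _)) hsecond
    _ = 2 * (k * M + K) * (y - x) ^ 2 := by
        linear_combination (k * M + K) * abs_mul_abs_self (x - y)

lemma hasDerivAt_of_taylorRemainderLE (hM : 0 ≤ M) (hK : 0 ≤ K)
    (hg : ∀ i, 1 ≤ i → i ≤ k → ∀ x, 0 < x → |g i x| ≤ M) (hR : TaylorRemainderLE g k K)
    {j : ℕ} (hjk : j < k) {x : ℝ} (hx : 0 < x) : HasDerivAt (g j) (g (j + 1) x) x := by
  refine hasDerivAt_of_abs_sub_le_sq (K := 2 * (k * M + K)) ?_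
  have hnear : Metric.ball x (1 / (k + 1)) ∈ nhds x := Metric.ball_mem_nhds x (by positivity)
  filter_upwards [Ioi_mem_nhds hx, hnear] with y hy hyx
  refine abs_sub_sub_mul_le_of_taylorRemainderLE hM hK hg hR hjk hx hy ?_
  rw [Metric.mem_ball, Real.dist_eq, lt_div_iff₀' (by positivity)] at hyx
  exact hyx.le

lemma iteratedDeriv_eqOn_of_taylorRemainderLE (hM : 0 ≤ M) (hK : 0 ≤ K)
    (hg : ∀ i, 1 ≤ i → i ≤ k → ∀ x, 0 < x → |g i x| ≤ M) (hR : TaylorRemainderLE g k K)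
    {j : ℕ} (hjk : j ≤ k) : Set.EqOn (iteratedDeriv j (g 0)) (g j) (Set.Ioi 0) := by
  induction j with
  | zero => intro x _; simp
  | succ j ih =>
    intro x hx
    rw [iteratedDeriv_succ]
    exact ((hasDerivAt_of_taylorRemainderLE hM hK hg hR hjk hx).congr_of_eventuallyEq
      (Filter.eventuallyEq_of_mem (Ioi_mem_nhds hx) (ih (by omega)))).deriv

end TaylorRemainderLE

theorem smoothness_core_general (k : ℕ) (M C : ℝ) (hM : 0 ≤ M) (hC : 0 ≤ C) :
    ∃ C' : ℝ, 0 ≤ C' ∧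
      ∀ (f : ℝ → ℝ) (c : ℕ → ℝ → ℝ),
        (∀ j : ℕ, 1 ≤ j → j ≤ k → ∀ ρ₀ : ℝ, 0 < ρ₀ → |c j ρ₀| ≤ M) →
        (∀ ρ₀ : ℝ, 0 < ρ₀ → ∀ ρ : ℝ, 0 < ρ → ρ ≤ 1 →
          |f (ρ₀ + ρ) - f ρ₀ -
              ∑ j ∈ Finset.Icc 1 k, c j ρ₀ * ρ ^ j / (Nat.factorial j : ℝ)| ≤
            C * ρ ^ (k + 1)) →
        (∀ j : ℕ, 1 ≤ j → j ≤ k → ∀ ρ₀ : ℝ, 0 < ρ₀ →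
          HasDerivAt (iteratedDeriv (j - 1) f) (c j ρ₀) ρ₀) ∧
        (∀ j : ℕ, 1 ≤ j → j ≤ k → ∀ ρ₀ ρ₁ : ℝ, 0 < ρ₀ → 0 < ρ₁ →
          |ρ₁ - ρ₀| ≤ 1 / (2 * ((k : ℝ) + 1)) →
          |c j ρ₁ - c j ρ₀| ≤ C' * |ρ₁ - ρ₀|) := by
  obtain ⟨K, hK, hRK⟩ := exists_taylorRemainderLE k hC
  refine ⟨k * M + K, by positivity, fun f c hcM hf => ?_⟩
  set g := Function.update c 0 f
  have hgc : ∀ j, 1 ≤ j → g j = c j := fun j hj => Function.update_of_ne (by omega) _ _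
  have hg : ∀ i, 1 ≤ i → i ≤ k → ∀ x, 0 < x → |g i x| ≤ M := fun i hi hik x hx => by
    rw [hgc i hi]; exact hcM i hi hik x hx
  have hR : TaylorRemainderLE g k K := hRK g fun x hx h hh hh₁ => by
    simpa only [g, taylorSum_update_zero, Function.update_self, sub_sub] using hf x hx h hh hh₁
  refine ⟨fun j hj hjk x hx => ?_, fun j hj hjk x y hx hy hxy => ?_⟩
  · obtain ⟨i, rfl⟩ : ∃ i, j = i + 1 := ⟨j - 1, by omega⟩
    rw [Nat.add_sub_cancel, ← hgc (i + 1) hj, ← Function.update_self 0 f c]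
    exact (hasDerivAt_of_taylorRemainderLE hM hK hg hR (by omega) hx).congr_of_eventuallyEq
      (Filter.eventuallyEq_of_mem (Ioi_mem_nhds hx)
        (iteratedDeriv_eqOn_of_taylorRemainderLE hM hK hg hR (by omega)))
  · rw [← hgc j hj]
    refine abs_sub_le_of_taylorRemainderLE hM hK hg hR hjk hx hy ?_
    rw [le_div_iff₀' (by positivity)] at hxy
    linarith [abs_nonneg (y - x)]

/-- a uniform one-sided `k`-th order expansion of `f` with coefficient
functions bounded by `M` implies that `f` is `k` times differentiable on `(0,∞)` with
`j`-th derivative `c_j` (expressed via `iteratedDeriv`: the `(j−1)`-st iterated derivative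
of `f` has derivative `c_j(ρ₀)` at each `ρ₀ > 0`), and each `c_j` is Lipschitz, with a
constant `C'` depending only on `k`, `M`, `C`, on pairs of positive points at distance at
most `1/(2(k+1))`. -/
theorem smoothness_core (k : ℕ) (hk : 1 ≤ k) (M C : ℝ) (hM : 0 ≤ M) (hC : 0 ≤ C) :
    ∃ C' : ℝ, 0 ≤ C' ∧
      ∀ (f : ℝ → ℝ) (c : ℕ → ℝ → ℝ),
        (∀ j : ℕ, 1 ≤ j → j ≤ k → ∀ ρ₀ : ℝ, 0 < ρ₀ → |c j ρ₀| ≤ M) →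
        (∀ ρ₀ : ℝ, 0 < ρ₀ → ∀ ρ : ℝ, 0 < ρ → ρ ≤ 1 →
          |f (ρ₀ + ρ) - f ρ₀ -
              ∑ j ∈ Finset.Icc 1 k, c j ρ₀ * ρ ^ j / (Nat.factorial j : ℝ)| ≤
            C * ρ ^ (k + 1)) →
        (∀ j : ℕ, 1 ≤ j → j ≤ k → ∀ ρ₀ : ℝ, 0 < ρ₀ →
          HasDerivAt (iteratedDeriv (j - 1) f) (c j ρ₀) ρ₀) ∧
        (∀ j : ℕ, 1 ≤ j → j ≤ k → ∀ ρ₀ ρ₁ : ℝ, 0 < ρ₀ → 0 < ρ₁ →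
          |ρ₁ - ρ₀| ≤ 1 / (2 * ((k : ℝ) + 1)) →
          |c j ρ₁ - c j ρ₀| ≤ C' * |ρ₁ - ρ₀|) :=
  smoothness_core_general k M C hM hC
end

section
/- Let k ≥ 1, M ≥ 0, C ≥ 0. Let f_m : (0,∞) → ℝ (m ∈ ℕ) and f : (0,∞) → ℝ be such that f_m(ρ₀) → f(ρ₀) as m → ∞ for every ρ₀ > 0. Let c_{j,m} : (0,∞) → ℝ (1 ≤ j ≤ k, m ∈ ℕ) satisfy |c_{j,m}(ρ₀)| ≤ M for all j, m, ρ₀, and assume that for every m, every ρ₀ > 0 and every ρ ∈ (0,1]: |f_m(ρ₀ + ρ) − f_m(ρ₀) − ∑_{j=1}^{k} c_{j,m}(ρ₀) ρ^j / j!| ≤ C ρ^{k+1}. Then for every 1 ≤ j ≤ k and every ρ₀ > 0 the limit c_j(ρ₀) := lim_{m→∞} c_{j,m}(ρ₀) exists, and the limit functions satisfy |f(ρ₀ + ρ) − f(ρ₀) − ∑_{j=1}^{k} c_j(ρ₀) ρ^j / j!| ≤ C ρ^{k+1} for all ρ₀ > 0 and ρ ∈ (0,1]. -/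
/-!
Write the expansions with monomial coefficients `b_{j,m} = c_{j,m} / j!` and peel the
coefficients off from the bottom. Once `b_{1,m}, …, b_{j-1,m}` converge, the quantity
`ρ^{-j} (f_m(ρ₀ + ρ) - f_m(ρ₀) - ∑_{i<j} b_{i,m} ρ^i)` converges as `m → ∞`, and the uniform bounds
on the higher coefficients and on the remainder put it within `(C + (k - j) M) ρ` of `b_{j,m}`,
uniformly in `m`. Letting `ρ → 0` shows that `(b_{j,m})_m` is Cauchy. The expansion of `f` is
then the limit of those of the `f_m`.
-/

open Filter Finset Topology

theorem cauchySeq_of_forall_exists_cauchySeq_dist_le {α : Type*} [PseudoMetricSpace α]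
    {u : ℕ → α} (h : ∀ ε > 0, ∃ v : ℕ → α, CauchySeq v ∧ ∀ n, dist (u n) (v n) ≤ ε) :
    CauchySeq u := by
  refine Metric.cauchySeq_iff'.2 fun ε hε => ?_
  obtain ⟨v, hv, huv⟩ := h (ε / 4) (by positivity)
  obtain ⟨N, hN⟩ := Metric.cauchySeq_iff'.1 hv (ε / 4) (by positivity)
  refine ⟨N, fun n hn => ?_⟩
  have hvN := huv N
  rw [dist_comm] at hvN
  linarith [dist_triangle4 (u n) (v n) (v N) (u N), huv n, hN n hn]

theorem Finset.sum_Icc_eq_sum_Ico_add_add_sum_Ioc {M : Type*} [AddCommMonoid M] (f : ℕ → M)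
    {a j k : ℕ} (haj : a ≤ j) (hjk : j ≤ k) :
    ∑ i ∈ Icc a k, f i = ∑ i ∈ Ico a j, f i + f j + ∑ i ∈ Ioc j k, f i := by
  rw [← Ico_add_one_right_eq_Icc, ← sum_Ico_consecutive f haj (by omega : j ≤ k + 1),
    sum_eq_sum_Ico_succ_bot (by omega : j < k + 1), Ico_add_one_add_one_eq_Ioc, add_assoc]

section PolynomialApproximation

variable {k : ℕ} {M C : ℝ} {g : ℕ → ℝ → ℝ} {b : ℕ → ℕ → ℝ}

theorem abs_coeff_sub_div_pow_le (hb : ∀ i ∈ Icc 1 k, ∀ m, |b i m| ≤ M) (hC : 0 ≤ C)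
    (happrox : ∀ m ρ, 0 < ρ → ρ ≤ 1 → |g m ρ - ∑ i ∈ Icc 1 k, b i m * ρ ^ i| ≤ C * ρ ^ (k + 1))
    {j : ℕ} (hj : j ∈ Icc 1 k) {ρ : ℝ} (hρ : 0 < ρ) (hρ1 : ρ ≤ 1) (m : ℕ) :
    |b j m - (g m ρ - ∑ i ∈ Ico 1 j, b i m * ρ ^ i) / ρ ^ j| ≤ (C + (k - j : ℕ) * M) * ρ := by
  obtain ⟨hj1, hjk⟩ := mem_Icc.1 hj
  have hsplit := sum_Icc_eq_sum_Ico_add_add_sum_Ioc (fun i => b i m * ρ ^ i) hj1 hjk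
  have hupper : |∑ i ∈ Ioc j k, b i m * ρ ^ i| ≤ (k - j : ℕ) * M * ρ ^ (j + 1) := by
    calc |∑ i ∈ Ioc j k, b i m * ρ ^ i| ≤ ∑ i ∈ Ioc j k, |b i m * ρ ^ i| := abs_sum_le_sum_abs _ _
      _ ≤ ∑ _i ∈ Ioc j k, M * ρ ^ (j + 1) := by
        refine sum_le_sum fun i hi => ?_
        obtain ⟨hji, hik⟩ := mem_Ioc.1 hi
        rw [abs_mul, abs_of_pos (pow_pos hρ i)]
        exact mul_le_mul (hb i (mem_Icc.2 ⟨by omega, hik⟩) m) (pow_le_pow_of_le_one hρ.le hρ1 hji)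
          (pow_pos hρ i).le ((abs_nonneg _).trans (hb i (mem_Icc.2 ⟨by omega, hik⟩) m))
      _ = (k - j : ℕ) * M * ρ ^ (j + 1) := by rw [sum_const, Nat.card_Ioc, nsmul_eq_mul, mul_assoc]
  have hremainder : C * ρ ^ (k + 1) ≤ C * ρ ^ (j + 1) :=
    mul_le_mul_of_nonneg_left (pow_le_pow_of_le_one hρ.le hρ1 (by omega)) hC
  have hρj : 0 < ρ ^ j := pow_pos hρ j
  rw [← mul_le_mul_iff_of_pos_right hρj, ← abs_of_pos hρj, ← abs_mul, abs_of_pos hρj, sub_mul,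
    div_mul_cancel₀ _ hρj.ne']
  calc |b j m * ρ ^ j - (g m ρ - ∑ i ∈ Ico 1 j, b i m * ρ ^ i)|
      = |-(g m ρ - ∑ i ∈ Icc 1 k, b i m * ρ ^ i) - ∑ i ∈ Ioc j k, b i m * ρ ^ i| := by
        rw [hsplit]; ring_nf
    _ ≤ C * ρ ^ (k + 1) + (k - j : ℕ) * M * ρ ^ (j + 1) := by
        refine (abs_sub _ _).trans (add_le_add ?_ hupper)
        rw [abs_neg]; exact happrox m ρ hρ hρ1
    _ ≤ C * ρ ^ (j + 1) + (k - j : ℕ) * M * ρ ^ (j + 1) := by linarith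
    _ = (C + (k - j : ℕ) * M) * ρ * ρ ^ j := by ring

theorem exists_tendsto_coeff_of_abs_sub_sum_le
    (hg : ∀ ρ, 0 < ρ → ρ ≤ 1 → ∃ G, Tendsto (g · ρ) atTop (𝓝 G))
    (hb : ∀ i ∈ Icc 1 k, ∀ m, |b i m| ≤ M) (hC : 0 ≤ C)
    (happrox : ∀ m ρ, 0 < ρ → ρ ≤ 1 → |g m ρ - ∑ i ∈ Icc 1 k, b i m * ρ ^ i| ≤ C * ρ ^ (k + 1)) :
    ∀ j ∈ Icc 1 k, ∃ β, Tendsto (b j) atTop (𝓝 β) := by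
  intro j
  induction j using Nat.strong_induction_on with
  | _ j ih =>
  intro hj
  obtain ⟨hj1, hjk⟩ := mem_Icc.1 hj
  refine cauchySeq_tendsto_of_complete (cauchySeq_of_forall_exists_cauchySeq_dist_le fun ε hε => ?_)
  set A : ℝ := C + (k - j : ℕ) * M
  have hsmall : ∀ᶠ ρ in 𝓝[>] 0, A * ρ ≤ ε := by
    have hlim : Tendsto (A * ·) (𝓝 (0 : ℝ)) (𝓝 0) := by
      simpa using (continuous_const_mul A).tendsto 0
    exact nhdsWithin_le_nhds (hlim.eventually (ge_mem_nhds hε))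
  obtain ⟨ρ, hAρ, hρ, hρ1⟩ := (hsmall.and (Ioo_mem_nhdsGT one_pos)).exists
  obtain ⟨G, hG⟩ := hg ρ hρ hρ1.le
  have hlower : Tendsto (fun m => ∑ i ∈ Ico 1 j, b i m * ρ ^ i) atTop
      (𝓝 (∑ i ∈ Ico 1 j, limUnder atTop (b i) * ρ ^ i)) := by
    refine tendsto_finsetSum _ fun i hi => ?_
    obtain ⟨hi1, hij⟩ := mem_Ico.1 hi
    exact (tendsto_nhds_limUnder (ih i hij (mem_Icc.2 ⟨hi1, by omega⟩))).mul_const _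
  refine ⟨_, ((hG.sub hlower).div_const (ρ ^ j)).cauchySeq, fun m => ?_⟩
  rw [Real.dist_eq]
  exact (abs_coeff_sub_div_pow_le hb hC happrox hj hρ hρ1.le m).trans hAρ

theorem exists_tendsto_taylorCoeff_of_abs_sub_sum_le
    (hg : ∀ ρ, 0 < ρ → ρ ≤ 1 → ∃ G, Tendsto (g · ρ) atTop (𝓝 G))
    (hb : ∀ i ∈ Icc 1 k, ∀ m, |b i m| ≤ M) (hC : 0 ≤ C)
    (happrox : ∀ m ρ, 0 < ρ → ρ ≤ 1 →
      |g m ρ - ∑ i ∈ Icc 1 k, b i m * ρ ^ i / i.factorial| ≤ C * ρ ^ (k + 1)) :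
    ∀ j ∈ Icc 1 k, ∃ β, Tendsto (b j) atTop (𝓝 β) := by
  intro j hj
  have hb' : ∀ i ∈ Icc 1 k, ∀ m, |b i m / i.factorial| ≤ M := fun i hi m => by
    rw [abs_div, Nat.abs_cast]
    exact (div_le_self (abs_nonneg _) (Nat.one_le_cast.2 i.factorial_pos)).trans (hb i hi m)
  obtain ⟨β, hβ⟩ := exists_tendsto_coeff_of_abs_sub_sum_le hg hb' hC
    (fun m ρ hρ hρ1 => by simpa only [div_mul_eq_mul_div] using happrox m ρ hρ hρ1) j hj
  exact ⟨j.factorial * β, (hβ.const_mul _).congr fun m => mul_div_cancel₀ _ (by positivity)⟩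

end PolynomialApproximation

theorem limit_of_finite_volume_expansions_general
    (k : ℕ) (M C : ℝ) (hC : 0 ≤ C)
    (fm : ℕ → ℝ → ℝ) (f : ℝ → ℝ)
    (hconv : ∀ ρ₀ : ℝ, 0 < ρ₀ → Tendsto (fun m => fm m ρ₀) atTop (nhds (f ρ₀)))
    (cm : ℕ → ℕ → ℝ → ℝ)
    (hbd : ∀ j m : ℕ, 1 ≤ j → j ≤ k → ∀ ρ₀ : ℝ, 0 < ρ₀ → |cm j m ρ₀| ≤ M)
    (hexp : ∀ m : ℕ, ∀ ρ₀ : ℝ, 0 < ρ₀ → ∀ ρ : ℝ, 0 < ρ → ρ ≤ 1 →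
      |fm m (ρ₀ + ρ) - fm m ρ₀ -
          ∑ j ∈ Finset.Icc 1 k, cm j m ρ₀ * ρ ^ j / (Nat.factorial j : ℝ)| ≤
        C * ρ ^ (k + 1)) :
    ∃ c : ℕ → ℝ → ℝ,
      (∀ j : ℕ, 1 ≤ j → j ≤ k → ∀ ρ₀ : ℝ, 0 < ρ₀ →
        Tendsto (fun m => cm j m ρ₀) atTop (nhds (c j ρ₀))) ∧
      (∀ ρ₀ : ℝ, 0 < ρ₀ → ∀ ρ : ℝ, 0 < ρ → ρ ≤ 1 →
        |f (ρ₀ + ρ) - f ρ₀ -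
            ∑ j ∈ Finset.Icc 1 k, c j ρ₀ * ρ ^ j / (Nat.factorial j : ℝ)| ≤
          C * ρ ^ (k + 1)) := by
  have hlim (j : ℕ) (hj1 : 1 ≤ j) (hjk : j ≤ k) (ρ₀ : ℝ) (hρ₀ : 0 < ρ₀) :
      ∃ L, Tendsto (fun m => cm j m ρ₀) atTop (𝓝 L) :=
    exists_tendsto_taylorCoeff_of_abs_sub_sum_le (g := fun m ρ => fm m (ρ₀ + ρ) - fm m ρ₀)
      (fun ρ hρ _ => ⟨_, (hconv _ (by positivity)).sub (hconv ρ₀ hρ₀)⟩)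
      (fun i hi m => hbd i m (mem_Icc.1 hi).1 (mem_Icc.1 hi).2 ρ₀ hρ₀) hC
      (fun m ρ hρ hρ1 => hexp m ρ₀ hρ₀ ρ hρ hρ1) j (mem_Icc.2 ⟨hj1, hjk⟩)
  refine ⟨fun j ρ₀ => limUnder atTop (fun m => cm j m ρ₀),
    fun j hj1 hjk ρ₀ hρ₀ => tendsto_nhds_limUnder (hlim j hj1 hjk ρ₀ hρ₀), ?_⟩
  intro ρ₀ hρ₀ ρ hρ hρ1
  have hsum : Tendsto (fun m => ∑ j ∈ Icc 1 k, cm j m ρ₀ * ρ ^ j / j.factorial) atTop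
      (𝓝 (∑ j ∈ Icc 1 k, limUnder atTop (fun m => cm j m ρ₀) * ρ ^ j / j.factorial)) := by
    refine tendsto_finsetSum _ fun j hj => ?_
    obtain ⟨hj1, hjk⟩ := mem_Icc.1 hj
    exact ((tendsto_nhds_limUnder (hlim j hj1 hjk ρ₀ hρ₀)).mul_const _).div_const _
  exact le_of_tendsto' (((hconv _ (by positivity)).sub (hconv ρ₀ hρ₀)).sub hsum).abs
    fun m => hexp m ρ₀ hρ₀ ρ hρ hρ1

/-- if `f_m → f` pointwise on `(0,∞)` and each `f_m` admits a uniform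
one-sided `k`-th order expansion with coefficients `c_{j,m}` bounded by `M`, then the
limits `c_j(ρ₀) = lim_m c_{j,m}(ρ₀)` exist for `1 ≤ j ≤ k` and `ρ₀ > 0`, and the limit
function `f` satisfies the same expansion with coefficients `c_j`. -/
theorem limit_of_finite_volume_expansions
    (k : ℕ) (hk : 1 ≤ k) (M C : ℝ) (hM : 0 ≤ M) (hC : 0 ≤ C)
    (fm : ℕ → ℝ → ℝ) (f : ℝ → ℝ)
    (hconv : ∀ ρ₀ : ℝ, 0 < ρ₀ → Tendsto (fun m => fm m ρ₀) atTop (nhds (f ρ₀)))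
    (cm : ℕ → ℕ → ℝ → ℝ)
    (hbd : ∀ j m : ℕ, 1 ≤ j → j ≤ k → ∀ ρ₀ : ℝ, 0 < ρ₀ → |cm j m ρ₀| ≤ M)
    (hexp : ∀ m : ℕ, ∀ ρ₀ : ℝ, 0 < ρ₀ → ∀ ρ : ℝ, 0 < ρ → ρ ≤ 1 →
      |fm m (ρ₀ + ρ) - fm m ρ₀ -
          ∑ j ∈ Finset.Icc 1 k, cm j m ρ₀ * ρ ^ j / (Nat.factorial j : ℝ)| ≤
        C * ρ ^ (k + 1)) :
    ∃ c : ℕ → ℝ → ℝ,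
      (∀ j : ℕ, 1 ≤ j → j ≤ k → ∀ ρ₀ : ℝ, 0 < ρ₀ →
        Tendsto (fun m => cm j m ρ₀) atTop (nhds (c j ρ₀))) ∧
      (∀ ρ₀ : ℝ, 0 < ρ₀ → ∀ ρ : ℝ, 0 < ρ → ρ ≤ 1 →
        |f (ρ₀ + ρ) - f ρ₀ -
            ∑ j ∈ Finset.Icc 1 k, c j ρ₀ * ρ ^ j / (Nat.factorial j : ℝ)| ≤
          C * ρ ^ (k + 1)) :=
  limit_of_finite_volume_expansions_general k M C hC fm f hconv cm hbd hexp
end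

section
/- Let d, n ≥ 1, let U ⊆ ℝ^d be a bounded Borel set, and let p ∈ ℝ^d. Let a be a measurable map assigning to each x = (x₁,…,x_n) ∈ (ℝ^d)^n and each index i ∈ {1,…,n} a symmetric positive semidefinite d×d real matrix a(x,i), and assume the permutation covariance a(x∘σ, i) = a(x, σ(i)) for every permutation σ of {1,…,n}, every x and i, where (x∘σ)_j := x_{σ(j)}. Let f : (ℝ^d)^n → ℝ be continuously differentiable and let f̃ := (1/n!) ∑_{σ} f∘σ be its symmetrization, the sum ranging over all permutations σ of {1,…,n}. Then ∫_{U^n} ∑_{i=1}^{n} (p + ∇_{x_i} f̃(x)) · a(x,i) (p + ∇_{x_i} f̃(x)) dx ≤ ∫_{U^n} ∑_{i=1}^{n} (p + ∇_{x_i} f(x)) · a(x,i) (p + ∇_{x_i} f(x)) dx, where ∇_{x_i} denotes the gradient with respect to the i-th ℝ^d-variable and both integrals of the nonnegative integrands are understood as values in [0,∞]. -/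
/-!
The `x_i`-gradient of the symmetrization `f̃` at `x` is the average over permutations `σ` of
`∇_{x_{σ⁻¹ i}} f (x ∘ σ)`. Since `v ↦ v · a(x,i) v` is a convex quadratic form, Jensen's inequality
bounds the energy density of `f̃` at `x` by the average over `σ` of the energy densities of `f` at
`x ∘ σ`; the covariance of `a` is what turns each of these terms into the energy density of `f`
itself, evaluated at `x ∘ σ`. As `U^n` and Lebesgue measure are invariant under permuting the
`n` variables, each of the `n!` averaged terms integrates to the energy of `f`.
-/

open MeasureTheory
open scoped ENNReal

/-- The partial gradient of `g : (ℝ^d)^n → ℝ` with respect to the `i`-th `ℝ^d`-variable,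
`j`-th coordinate: the directional derivative of `g` in the direction of the unit vector
in the `(i,j)` slot. -/
noncomputable def partialGrad {d n : ℕ}
    (g : (Fin n → Fin d → ℝ) → ℝ) (x : Fin n → Fin d → ℝ) (i : Fin n) (j : Fin d) : ℝ :=
  fderiv ℝ g x (Pi.single i (Pi.single j 1))

/-- The symmetrization `f̃ = (1/n!) ∑_σ f ∘ σ` of `f : (ℝ^d)^n → ℝ` over the
permutations of the `n` variables. -/
noncomputable def symmetrization {d n : ℕ}
    (f : (Fin n → Fin d → ℝ) → ℝ) (x : Fin n → Fin d → ℝ) : ℝ :=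
  (1 / (Nat.factorial n : ℝ)) * ∑ σ : Equiv.Perm (Fin n), f (fun i => x (σ i))

open Finset

section QuadForm

variable {κ : Type*} [Fintype κ]

def quadForm (A : κ → κ → ℝ) (v : κ → ℝ) : ℝ := ∑ j, ∑ l, v j * A j l * v l

lemma quadForm_smul_add_smul (A : κ → κ → ℝ) (u v : κ → ℝ) {a b : ℝ} (hab : a + b = 1) :
    quadForm A (a • u + b • v) =
      a * quadForm A u + b * quadForm A v - a * b * quadForm A (u - v) := by
  obtain rfl : b = 1 - a := by linarith
  simp only [quadForm, mul_sum, ← sum_sub_distrib, ← sum_add_distrib]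
  refine sum_congr rfl fun j _ => sum_congr rfl fun l _ => ?_
  simp only [Pi.add_apply, Pi.smul_apply, Pi.sub_apply, smul_eq_mul]
  ring

lemma convexOn_quadForm {A : κ → κ → ℝ} (hA : ∀ v, 0 ≤ quadForm A v) :
    ConvexOn ℝ Set.univ (quadForm A) := by
  refine ⟨convex_univ, fun u _ v _ a b ha hb hab => ?_⟩
  rw [quadForm_smul_add_smul A u v hab, smul_eq_mul, smul_eq_mul]
  have := mul_nonneg (mul_nonneg ha hb) (hA (u - v))
  linarith

end QuadForm

section Permutation

variable {𝕜 ι E F : Type*} [NontriviallyNormedField 𝕜]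
  [NormedAddCommGroup E] [NormedSpace 𝕜 E] [NormedAddCommGroup F] [NormedSpace 𝕜 F]

variable (𝕜 E) in
def permuteCLM (σ : Equiv.Perm ι) : (ι → E) →L[𝕜] (ι → E) :=
  ContinuousLinearMap.pi fun i => ContinuousLinearMap.proj (σ i)

lemma permuteCLM_single [DecidableEq ι] (σ : Equiv.Perm ι) (i : ι) (v : E) :
    permuteCLM 𝕜 E σ (Pi.single i v) = Pi.single (σ⁻¹ i) v := by
  ext m
  simp [permuteCLM, Pi.single_apply, Equiv.eq_symm_apply]

lemma fderiv_comp_permute_single [Fintype ι] [DecidableEq ι] {g : (ι → E) → F}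
    {σ : Equiv.Perm ι} {x : ι → E} (hg : DifferentiableAt 𝕜 g (fun m => x (σ m)))
    (i : ι) (v : E) :
    fderiv 𝕜 (fun y : ι → E => g (fun m => y (σ m))) x (Pi.single i v) =
      fderiv 𝕜 g (fun m => x (σ m)) (Pi.single (σ⁻¹ i) v) := by
  have hcomp : (fun y : ι → E => g (fun m => y (σ m))) = g ∘ permuteCLM 𝕜 E σ := rfl
  rw [hcomp, fderiv_comp x hg (permuteCLM 𝕜 E σ).differentiableAt, (permuteCLM 𝕜 E σ).fderiv,
    ContinuousLinearMap.comp_apply, permuteCLM_single]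
  rfl

end Permutation

section Energy

variable {d n : ℕ}

lemma partialGrad_symmetrization {f : (Fin n → Fin d → ℝ) → ℝ} (hf : Differentiable ℝ f)
    (x : Fin n → Fin d → ℝ) (i : Fin n) (j : Fin d) :
    partialGrad (symmetrization f) x i j =
      1 / (n.factorial : ℝ) *
        ∑ σ : Equiv.Perm (Fin n), partialGrad f (fun m => x (σ m)) (σ⁻¹ i) j := by
  have hσ (σ : Equiv.Perm (Fin n)) :
      DifferentiableAt ℝ (fun y : Fin n → Fin d → ℝ => f (fun m => y (σ m))) x :=
    (hf _).comp x (permuteCLM ℝ (Fin d → ℝ) σ).differentiableAt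
  unfold symmetrization partialGrad
  rw [fderiv_const_mul (DifferentiableAt.fun_sum fun σ _ => hσ σ),
    fderiv_fun_sum fun σ _ => hσ σ, _root_.smul_apply, _root_.sum_apply, smul_eq_mul]
  simp only [fderiv_comp_permute_single (hf _)]

noncomputable def energyDensity (p : Fin d → ℝ)
    (a : (Fin n → Fin d → ℝ) → Fin n → Fin d → Fin d → ℝ) (g : (Fin n → Fin d → ℝ) → ℝ)
    (x : Fin n → Fin d → ℝ) : ℝ :=
  ∑ i, quadForm (a x i) (p + fun j => partialGrad g x i j)

variable {p : Fin d → ℝ} {a : (Fin n → Fin d → ℝ) → Fin n → Fin d → Fin d → ℝ}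
  {f : (Fin n → Fin d → ℝ) → ℝ}

lemma energyDensity_nonneg (hpsd : ∀ x i v, 0 ≤ quadForm (a x i) v)
    (g : (Fin n → Fin d → ℝ) → ℝ) (x : Fin n → Fin d → ℝ) : 0 ≤ energyDensity p a g x :=
  sum_nonneg fun i _ => hpsd x i _

lemma measurable_energyDensity (ha : Measurable a) (hf : ContDiff ℝ 1 f) :
    Measurable (energyDensity p a f) := by
  have hgrad (i : Fin n) (j : Fin d) : Measurable fun x => partialGrad f x i j :=
    ((hf.continuous_fderiv one_ne_zero).clm_apply continuous_const).measurable
  unfold energyDensity quadForm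
  fun_prop

lemma energyDensity_comp_perm
    (hcov : ∀ (σ : Equiv.Perm (Fin n)) x i, a (fun m => x (σ m)) i = a x (σ i))
    (σ : Equiv.Perm (Fin n)) (x : Fin n → Fin d → ℝ) :
    energyDensity p a f (fun m => x (σ m)) =
      ∑ i, quadForm (a x i) (p + fun j => partialGrad f (fun m => x (σ m)) (σ⁻¹ i) j) := by
  rw [← Equiv.sum_comp σ]
  simp only [Equiv.Perm.coe_inv, Equiv.symm_apply_apply, ← hcov]
  rfl

lemma energyDensity_symmetrization_le (hpsd : ∀ x i v, 0 ≤ quadForm (a x i) v)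
    (hcov : ∀ (σ : Equiv.Perm (Fin n)) x i, a (fun m => x (σ m)) i = a x (σ i))
    (hf : Differentiable ℝ f) (x : Fin n → Fin d → ℝ) :
    energyDensity p a (symmetrization f) x ≤
      1 / (n.factorial : ℝ) *
        ∑ σ : Equiv.Perm (Fin n), energyDensity p a f (fun m => x (σ m)) := by
  set w : Equiv.Perm (Fin n) → Fin n → Fin d → ℝ :=
    fun σ i => p + fun j => partialGrad f (fun m => x (σ m)) (σ⁻¹ i) j
  have hc : ∑ _σ : Equiv.Perm (Fin n), 1 / (n.factorial : ℝ) = 1 := by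
    rw [sum_const, card_univ, Fintype.card_perm, Fintype.card_fin, nsmul_eq_mul]
    exact mul_one_div_cancel (by positivity)
  have haverage (i : Fin n) :
      (p + fun j => partialGrad (symmetrization f) x i j) =
        ∑ σ, (1 / (n.factorial : ℝ)) • w σ i := by
    ext j
    simp only [w, partialGrad_symmetrization hf, Pi.add_apply, Finset.sum_apply, Pi.smul_apply,
      smul_eq_mul, mul_add, sum_add_distrib, ← sum_mul, hc, one_mul, ← mul_sum]
  calc energyDensity p a (symmetrization f) x
        = ∑ i, quadForm (a x i) (∑ σ, (1 / (n.factorial : ℝ)) • w σ i) := by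
        simp only [energyDensity, haverage]
    _ ≤ ∑ i, ∑ σ, (1 / (n.factorial : ℝ)) • quadForm (a x i) (w σ i) := sum_le_sum fun i _ =>
        (convexOn_quadForm (hpsd x i)).map_sum_le (fun _ _ => by positivity) hc
          fun _ _ => Set.mem_univ _
    _ = 1 / (n.factorial : ℝ) *
          ∑ σ : Equiv.Perm (Fin n), energyDensity p a f (fun m => x (σ m)) := by
        simp only [sum_comm (γ := Fin n), smul_eq_mul, ← mul_sum, w,
          ← energyDensity_comp_perm hcov]

lemma ofReal_energyDensity_symmetrization_le (hpsd : ∀ x i v, 0 ≤ quadForm (a x i) v)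
    (hcov : ∀ (σ : Equiv.Perm (Fin n)) x i, a (fun m => x (σ m)) i = a x (σ i))
    (hf : Differentiable ℝ f) (x : Fin n → Fin d → ℝ) :
    ENNReal.ofReal (energyDensity p a (symmetrization f) x) ≤
      (n.factorial : ℝ≥0∞)⁻¹ *
        ∑ σ : Equiv.Perm (Fin n), ENNReal.ofReal (energyDensity p a f (fun m => x (σ m))) := by
  have hweight : ENNReal.ofReal (1 / n.factorial) = (n.factorial : ℝ≥0∞)⁻¹ := by
    rw [one_div, ENNReal.ofReal_inv_of_pos (by positivity), ENNReal.ofReal_natCast]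
  rw [← ENNReal.ofReal_sum_of_nonneg fun σ _ => energyDensity_nonneg hpsd f _, ← hweight,
    ← ENNReal.ofReal_mul (by positivity)]
  exact ENNReal.ofReal_le_ofReal (energyDensity_symmetrization_le hpsd hcov hf x)

end Energy

section PiPermutation

variable {ι α : Type*} [Fintype ι] [MeasureSpace α] [SigmaFinite (volume : Measure α)]

lemma setLIntegral_comp_perm (σ : Equiv.Perm ι) (U : Set α) (F : (ι → α) → ℝ≥0∞) :
    ∫⁻ x in {y : ι → α | ∀ i, y i ∈ U}, F (fun i => x (σ i)) =
      ∫⁻ x in {y : ι → α | ∀ i, y i ∈ U}, F x := by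
  set e := MeasurableEquiv.piCongrLeft (fun _ : ι => α) σ.symm
  have he (x : ι → α) : e x = fun i => x (σ i) := by
    ext i
    simp [e, MeasurableEquiv.piCongrLeft, Equiv.piCongrLeft_apply_eq_cast]
  have hpre : e ⁻¹' {y | ∀ i, y i ∈ U} = {y | ∀ i, y i ∈ U} := by
    ext x
    simp only [Set.mem_preimage, Set.mem_ofPred_eq, he]
    exact ⟨fun h i => by simpa using h (σ⁻¹ i), fun h i => h (σ i)⟩
  calc ∫⁻ x in {y : ι → α | ∀ i, y i ∈ U}, F (fun i => x (σ i))
      = ∫⁻ x in e ⁻¹' {y | ∀ i, y i ∈ U}, F (e x) := by simp only [hpre, he]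
    _ = ∫⁻ x in {y : ι → α | ∀ i, y i ∈ U}, F x :=
      (volume_measurePreserving_piCongrLeft _ σ.symm).setLIntegral_comp_preimage_emb
        e.measurableEmbedding F _

lemma setLIntegral_sum_comp_perm [DecidableEq ι] (U : Set α) {F : (ι → α) → ℝ≥0∞}
    (hF : Measurable F) :
    ∫⁻ x in {y : ι → α | ∀ i, y i ∈ U}, ∑ σ : Equiv.Perm ι, F (fun i => x (σ i)) =
      (Fintype.card ι).factorial * ∫⁻ x in {y : ι → α | ∀ i, y i ∈ U}, F x := by
  refine (lintegral_finsetSum _ fun σ _ =>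
    hF.comp (measurable_pi_lambda _ fun i => measurable_pi_apply (σ i))).trans ?_
  simp only [Function.comp_apply, setLIntegral_comp_perm, sum_const, card_univ, Fintype.card_perm,
    nsmul_eq_mul]

end PiPermutation

theorem symmetrization_decreases_energy_general
    {d n : ℕ}
    (U : Set (Fin d → ℝ))
    (p : Fin d → ℝ)
    (a : (Fin n → Fin d → ℝ) → Fin n → Fin d → Fin d → ℝ)
    (ha : Measurable a)
    (hpsd : ∀ x i (v : Fin d → ℝ), 0 ≤ ∑ j, ∑ l, v j * a x i j l * v l)
    (hcov : ∀ (σ : Equiv.Perm (Fin n)) (x : Fin n → Fin d → ℝ) (i : Fin n),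
      a (fun m => x (σ m)) i = a x (σ i))
    (f : (Fin n → Fin d → ℝ) → ℝ) (hf : ContDiff ℝ 1 f) :
    (∫⁻ x in {y : Fin n → Fin d → ℝ | ∀ i, y i ∈ U},
        ENNReal.ofReal (∑ i, ∑ j, ∑ l,
          (p j + partialGrad (symmetrization f) x i j) * a x i j l *
            (p l + partialGrad (symmetrization f) x i l))) ≤
      ∫⁻ x in {y : Fin n → Fin d → ℝ | ∀ i, y i ∈ U},
        ENNReal.ofReal (∑ i, ∑ j, ∑ l,
          (p j + partialGrad f x i j) * a x i j l *
            (p l + partialGrad f x i l)) := by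
  set S := {y : Fin n → Fin d → ℝ | ∀ i, y i ∈ U}
  have hfact : (n.factorial : ℝ≥0∞) ≠ 0 := by exact_mod_cast n.factorial_ne_zero
  calc ∫⁻ x in S, ENNReal.ofReal (energyDensity p a (symmetrization f) x)
      ≤ ∫⁻ x in S, (n.factorial : ℝ≥0∞)⁻¹ *
          ∑ σ : Equiv.Perm (Fin n), ENNReal.ofReal (energyDensity p a f (fun m => x (σ m))) :=
        lintegral_mono <| ofReal_energyDensity_symmetrization_le hpsd hcov
          (hf.differentiable one_ne_zero)
    _ = (n.factorial : ℝ≥0∞)⁻¹ *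
          (n.factorial * ∫⁻ x in S, ENNReal.ofReal (energyDensity p a f x)) := by
        rw [lintegral_const_mul' _ _ (ENNReal.inv_ne_top.2 hfact), setLIntegral_sum_comp_perm U
          (measurable_energyDensity ha hf).ennreal_ofReal, Fintype.card_fin]
    _ = ∫⁻ x in S, ENNReal.ofReal (energyDensity p a f x) :=
        ENNReal.inv_mul_cancel_left hfact (ENNReal.natCast_ne_top _)

/-- for a permutation-covariant measurable family of symmetric positive
semidefinite matrices `a(x,i)` and a `C¹` function `f`, the Dirichlet energy of the
symmetrization `f̃` is at most the Dirichlet energy of `f`: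
`∫_{U^n} ∑_i (p + ∇_{x_i} f̃)·a(x,i)(p + ∇_{x_i} f̃) dx ≤
 ∫_{U^n} ∑_i (p + ∇_{x_i} f)·a(x,i)(p + ∇_{x_i} f) dx`. -/
theorem symmetrization_decreases_energy
    {d n : ℕ} (hd : 1 ≤ d) (hn : 1 ≤ n)
    (U : Set (Fin d → ℝ)) (hU : MeasurableSet U) (hUb : Bornology.IsBounded U)
    (p : Fin d → ℝ)
    (a : (Fin n → Fin d → ℝ) → Fin n → Fin d → Fin d → ℝ)
    (ha : Measurable a)
    (hsymm : ∀ x i j l, a x i j l = a x i l j)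
    (hpsd : ∀ x i (v : Fin d → ℝ), 0 ≤ ∑ j, ∑ l, v j * a x i j l * v l)
    (hcov : ∀ (σ : Equiv.Perm (Fin n)) (x : Fin n → Fin d → ℝ) (i : Fin n),
      a (fun m => x (σ m)) i = a x (σ i))
    (f : (Fin n → Fin d → ℝ) → ℝ) (hf : ContDiff ℝ 1 f) :
    (∫⁻ x in {y : Fin n → Fin d → ℝ | ∀ i, y i ∈ U},
        ENNReal.ofReal (∑ i, ∑ j, ∑ l,
          (p j + partialGrad (symmetrization f) x i j) * a x i j l *
            (p l + partialGrad (symmetrization f) x i l))) ≤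
      ∫⁻ x in {y : Fin n → Fin d → ℝ | ∀ i, y i ∈ U},
        ENNReal.ofReal (∑ i, ∑ j, ∑ l,
          (p j + partialGrad f x i j) * a x i j l *
            (p l + partialGrad f x i l)) :=
  symmetrization_decreases_energy_general U p a ha hpsd hcov f hf
end

section
/- Let (a_j)_{j∈ℕ} be a sequence of real numbers and C ≥ 0 with |a_j| ≤ C(1+j) for all j ∈ ℕ. For k ∈ ℕ set b_k := ∑_{j=0}^{k} (−1)^{k−j} binom(k,j) a_j. Then for every t ≥ 0, the series ∑_{j=0}^∞ (t^j/j!) a_j and ∑_{k=0}^∞ (t^k/k!) b_k both converge absolutely, and e^{−t} ∑_{j=0}^∞ (t^j/j!) a_j = ∑_{k=0}^∞ (t^k/k!) b_k. -/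
/-!
Since `(-t)^(k-j)/(k-j)! · t^j/j! = t^k/k! · (-1)^(k-j) binom(k,j)`, the right-hand side is
the Cauchy product of `∑ t^j/j! a_j` with the exponential series `∑ (-t)^i/i! = e^{-t}`. The linear
bound gives `|a_j| ≤ C 2^j`, so the first factor converges absolutely like the series of
`e^{2|t|}`, and the Cauchy product of two absolutely convergent series converges absolutely to
the product of their sums.
-/

open Finset Nat

theorem summable_abs_pow_div_factorial_mul_of_abs_le {a : ℕ → ℝ} {C r : ℝ}
    (ha : ∀ j, |a j| ≤ C * r ^ j) (t : ℝ) :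
    Summable fun j : ℕ => |t ^ j / j ! * a j| := by
  refine .of_nonneg_of_le (fun _ => abs_nonneg _) (fun j => ?_)
    ((Real.summable_pow_div_factorial (|t| * r)).mul_left C)
  calc |t ^ j / j ! * a j| = |t| ^ j / j ! * |a j| := by
        rw [abs_mul, abs_div, abs_pow, Nat.abs_cast]
    _ ≤ |t| ^ j / j ! * (C * r ^ j) := by gcongr; exact ha j
    _ = C * ((|t| * r) ^ j / j !) := by ring

theorem sum_antidiagonal_pow_div_factorial_mul_neg_pow_div_factorial
    {K : Type*} [Field K] [CharZero K] (t : K) (a : ℕ → K) (k : ℕ) :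
    ∑ p ∈ antidiagonal k, t ^ p.1 / p.1 ! * a p.1 * ((-t) ^ p.2 / p.2 !) =
      t ^ k / k ! * ∑ j ∈ range (k + 1), (-1 : K) ^ (k - j) * (k.choose j : K) * a j := by
  rw [Finset.Nat.sum_antidiagonal_eq_sum_range_succ
    (fun i j => t ^ i / i ! * a i * ((-t) ^ j / j !)), mul_sum]
  refine sum_congr rfl fun j hj => ?_
  have hjk : j ≤ k := Nat.lt_succ_iff.mp (mem_range.mp hj)
  have hk : (k ! : K) ≠ 0 := Nat.cast_ne_zero.mpr k.factorial_ne_zero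
  rw [Nat.cast_choose K hjk, neg_pow, ← pow_mul_pow_sub t hjk]
  field_simp

/-- if `|a_j| ≤ C(1+j)` and
`b_k = ∑_{j=0}^{k} (−1)^{k−j} binom(k,j) a_j`, then for every `t ≥ 0` the series
`∑ (t^j/j!) a_j` and `∑ (t^k/k!) b_k` converge absolutely, and
`e^{−t} ∑_j (t^j/j!) a_j = ∑_k (t^k/k!) b_k`. -/
theorem exponential_forward_difference_identity
    (a : ℕ → ℝ) (C : ℝ) (hC : 0 ≤ C) (hbd : ∀ j : ℕ, |a j| ≤ C * (1 + (j : ℝ))) :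
    ∀ t : ℝ, 0 ≤ t →
      Summable (fun j : ℕ => |t ^ j / (Nat.factorial j : ℝ) * a j|) ∧
      Summable (fun k : ℕ => |t ^ k / (Nat.factorial k : ℝ) *
        ∑ j ∈ Finset.range (k + 1), (-1 : ℝ) ^ (k - j) * (k.choose j : ℝ) * a j|) ∧
      Real.exp (-t) * ∑' j : ℕ, t ^ j / (Nat.factorial j : ℝ) * a j =
        ∑' k : ℕ, t ^ k / (Nat.factorial k : ℝ) *
          ∑ j ∈ Finset.range (k + 1), (-1 : ℝ) ^ (k - j) * (k.choose j : ℝ) * a j := by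
  intro t _
  have ha : ∀ j, |a j| ≤ C * 2 ^ j := fun j =>
    (hbd j).trans <| mul_le_mul_of_nonneg_left
      (by exact_mod_cast Nat.one_add_le_iff.mpr Nat.lt_two_pow_self) hC
  have hf : Summable fun j : ℕ => ‖t ^ j / (j ! : ℝ) * a j‖ :=
    summable_abs_pow_div_factorial_mul_of_abs_le ha t
  have he : Summable fun i : ℕ => ‖(-t) ^ i / (i ! : ℝ)‖ :=
    NormedSpace.norm_expSeries_div_summable _
  have hcoeff := sum_antidiagonal_pow_div_factorial_mul_neg_pow_div_factorial t a
  refine ⟨hf, ?_, ?_⟩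
  · simpa only [hcoeff, Real.norm_eq_abs] using
      summable_norm_sum_mul_antidiagonal_of_summable_norm hf he
  · calc Real.exp (-t) * ∑' j : ℕ, t ^ j / j ! * a j
        = (∑' j : ℕ, t ^ j / j ! * a j) * ∑' i : ℕ, (-t) ^ i / i ! := by
          rw [Real.exp_eq_exp_ℝ, (NormedSpace.expSeries_div_hasSum_exp (-t)).tsum_eq, mul_comm]
      _ = _ := (tsum_mul_tsum_eq_tsum_sum_antidiagonal_of_summable_norm hf he).trans
          (tsum_congr hcoeff)
end
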